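/- arXiv:2208.04252 — 7 statements merged into one kernel-verified Lean document; each statement's English description precedes it below -/
import Mathlib

section
/- Let m ≥ 1/2, ρ > 0, β > 0, and let L ≥ 1 be a fixed integer. For each N > L, let W_{1,N}, …, W_{N,N} be i.i.d. real random variables, each with the normalized Gamma(m) distribution, and let T_N denote the top-L sum of (W_{1,N}, …, W_{N,N}). Then the expectation E[log₂(1 + ρ β T_N)] divided by log₂(1 + ρ β (L/m) log N) converges to 1 as N → ∞. -/
open MeasureTheory ProbabilityTheory Filter Real

/-- The top-`L` sum of the values `w 0, …, w (N-1)`: the maximum over subsets `S` of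
cardinality `L` of `∑ n ∈ S, w n`, i.e. the sum of the `L` largest values. -/
noncomputable def topSum {N : ℕ} (L : ℕ) (w : Fin N → ℝ) : ℝ :=
  sSup {x : ℝ | ∃ S : Finset (Fin N), S.card = L ∧ x = ∑ n ∈ S, w n}

/-!
Write `c = ρβ` and `T_N` for the top-`L` sum. Both bounds below are of order `log log N`, which is
all that matters, since `log (1 + a log N) ~ log log N` for every `a > 0`.

Upper bound: `log (1 + c x) ≤ log (1 + c a) + c (x - a)⁺` and `(T_N - L b)⁺ ≤ ∑ₙ (Wₙ - b)⁺`, while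
the Chernoff bound `E (W - b)⁺ ≤ e^(-m b / 2) E e^(m W / 2) / (m / 2)` makes the sum of the
`N` expected excesses bounded once `b = (2 / m) log N`.

Lower bound: `T_N ≥ max Wₙ`, and the gamma density gives `P (W ≥ t) ≥ C e^(-(m + 1) t)`. With
`t = log N / (2 (m + 1))` the probability that all `N` samples stay below `t` is at most
`exp (-C √N) → 0`, so `E log (1 + c T_N) ≥ (1 - o(1)) log (1 + c t)`.
-/

open Set Asymptotics Topology

section TopSum

variable {N L : ℕ} (w : Fin N → ℝ)

lemma powersetCard_univ_nonempty (h : L ≤ N) :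
    (Finset.univ.powersetCard L : Finset (Finset (Fin N))).Nonempty :=
  Finset.powersetCard_nonempty.mpr (by simpa using h)

lemma topSum_eq_sup' (h : L ≤ N) :
    topSum L w = (Finset.univ.powersetCard L).sup' (powersetCard_univ_nonempty h)
      fun S => ∑ n ∈ S, w n := by
  rw [Finset.sup'_eq_csSup_image, topSum]
  congr 1
  ext x
  simp [eq_comm]

lemma le_topSum (h : L ≤ N) {S : Finset (Fin N)} (hS : S.card = L) :
    ∑ n ∈ S, w n ≤ topSum L w := by
  rw [topSum_eq_sup' w h]
  exact Finset.le_sup' (fun S => ∑ n ∈ S, w n) (Finset.mem_powersetCard_univ.mpr hS)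

lemma topSum_le (h : L ≤ N) {a : ℝ} (ha : ∀ S : Finset (Fin N), S.card = L → ∑ n ∈ S, w n ≤ a) :
    topSum L w ≤ a := by
  rw [topSum_eq_sup' w h]
  exact Finset.sup'_le _ _ fun S hS => ha S (Finset.mem_powersetCard_univ.mp hS)

lemma le_topSum_of_le (hL : 1 ≤ L) (h : L ≤ N) (hw : ∀ n, 0 ≤ w n) {t : ℝ} {n : Fin N}
    (hn : t ≤ w n) : t ≤ topSum L w := by
  obtain ⟨S, hnS, hS⟩ := Finset.exists_superset_card_eq
    (s := {n}) (by simpa using hL) (by simpa using h)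
  calc t ≤ ∑ i ∈ {n}, w i := by simpa using hn
    _ ≤ ∑ i ∈ S, w i := Finset.sum_le_sum_of_subset_of_nonneg hnS fun i _ _ => hw i
    _ ≤ topSum L w := le_topSum w h hS

lemma topSum_nonneg (h : L ≤ N) (hw : ∀ n, 0 ≤ w n) : 0 ≤ topSum L w := by
  obtain ⟨S, hS⟩ := powersetCard_univ_nonempty h
  exact (Finset.sum_nonneg fun n _ => hw n).trans
    (le_topSum w h (Finset.mem_powersetCard_univ.mp hS))

lemma topSum_sub_le_sum_max (h : L ≤ N) (b : ℝ) :
    topSum L w - L * b ≤ ∑ n, max (w n - b) 0 := by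
  rw [sub_le_iff_le_add]
  refine topSum_le w h fun S hS => ?_
  calc ∑ n ∈ S, w n = ∑ n ∈ S, (w n - b) + L * b := by simp [Finset.sum_sub_distrib, hS]
    _ ≤ ∑ n ∈ S, max (w n - b) 0 + L * b := by gcongr with n; exact le_max_left _ _
    _ ≤ ∑ n, max (w n - b) 0 + L * b := by
      gcongr ?_ + _
      exact Finset.sum_le_sum_of_subset_of_nonneg S.subset_univ
        fun n _ _ => le_max_right (w n - b) 0

lemma measurable_topSum {α : Type*} [MeasurableSpace α] (h : L ≤ N) {f : Fin N → α → ℝ}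
    (hf : ∀ n, Measurable (f n)) : Measurable fun x => topSum L fun n => f n x := by
  have : (fun x => topSum L fun n => f n x) =
      (Finset.univ.powersetCard L).sup' (powersetCard_univ_nonempty h)
        fun S x => ∑ n ∈ S, f n x := by
    ext x
    rw [topSum_eq_sup' _ h, Finset.sup'_apply]
  rw [this]
  exact Finset.measurable_sup' _ fun S _ => Finset.measurable_sum _ fun n _ => hf n

end TopSum

lemma log_one_add_mul_le {c a x : ℝ} (hc : 0 ≤ c) (ha : 0 ≤ a) (hx : 0 ≤ x) :
    log (1 + c * x) ≤ log (1 + c * a) + c * max (x - a) 0 := by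
  have hexp := add_one_le_exp (c * max (x - a) 0)
  have hmax : x - a ≤ max (x - a) 0 := le_max_left _ _
  have : 0 ≤ c * max (x - a) 0 := mul_nonneg hc (le_max_right _ _)
  calc log (1 + c * x) ≤ log ((1 + c * a) * exp (c * max (x - a) 0)) := by
        refine log_le_log (by positivity) ?_
        nlinarith [mul_le_mul_of_nonneg_left hmax hc, mul_nonneg (mul_nonneg hc ha) this,
          mul_le_mul_of_nonneg_left hexp (by positivity : 0 ≤ 1 + c * a)]
    _ = log (1 + c * a) + c * max (x - a) 0 := by
        rw [log_mul (by positivity) (exp_pos _).ne', log_exp]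

lemma log_one_add_mul_topSum_le {N L : ℕ} {w : Fin N → ℝ} {c b : ℝ} (hc : 0 ≤ c) (hb : 0 ≤ b)
    (hLN : L ≤ N) (hw : ∀ n, 0 ≤ w n) :
    log (1 + c * topSum L w) ≤ log (1 + c * (L * b)) + c * ∑ n, max (w n - b) 0 := by
  calc log (1 + c * topSum L w)
      ≤ log (1 + c * (L * b)) + c * max (topSum L w - L * b) 0 :=
        log_one_add_mul_le hc (by positivity) (topSum_nonneg w hLN hw)
    _ ≤ log (1 + c * (L * b)) + c * ∑ n, max (w n - b) 0 := by
        gcongr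
        exact max_le (topSum_sub_le_sum_max w hLN b)
          (Finset.sum_nonneg fun n _ => le_max_right _ _)

lemma max_sub_le_exp_mul {s : ℝ} (hs : 0 < s) (b x : ℝ) :
    max (x - b) 0 ≤ exp (-(s * b)) / s * exp (s * x) := by
  rw [div_mul_eq_mul_div, ← exp_add, le_div_iff₀ hs]
  rcases le_total (x - b) 0 with h | h
  · rw [max_eq_right h, zero_mul]
    positivity
  · rw [max_eq_left h]
    linarith [add_one_le_exp (-(s * b) + s * x)]

lemma one_sub_pow_le_exp_neg_mul {p q : ℝ} (hpq : p ≤ q) (hq : q ≤ 1) (N : ℕ) :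
    (1 - q) ^ N ≤ exp (-(N * p)) := by
  calc (1 - q) ^ N ≤ exp (-p) ^ N := by
        gcongr
        linarith [one_sub_le_exp_neg q, exp_le_exp.mpr (neg_le_neg hpq)]
    _ = exp (-(N * p)) := by rw [← exp_nat_mul]; ring_nf

lemma isEquivalent_log_add_mul {p : ℝ} (hp : 0 < p) (q : ℝ) :
    (fun x => log (q + p * x)) ~[atTop] log := by
  have hlim : Tendsto (fun x => log (q / x + p)) atTop (𝓝 (log p)) := by
    refine ((continuousAt_log hp.ne').tendsto).comp ?_
    simpa using (tendsto_const_nhds.div_atTop tendsto_id).add_const p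
  have hdiff : (fun x => log (q + p * x) - log x) =o[atTop] log := by
    refine (hlim.isBigO_one ℝ).trans_isLittleO ?_ |>.congr' ?_ EventuallyEq.rfl
    · exact isLittleO_const_left.mpr (Or.inr (tendsto_norm_atTop_atTop.comp tendsto_log_atTop))
    · filter_upwards [eventually_gt_atTop 0, eventually_gt_atTop (|q| / p)] with x hx hqx
      have : 0 < q + p * x := by
        rw [div_lt_iff₀ hp] at hqx
        linarith [neg_abs_le q]
      rw [← log_div this.ne' hx.ne', add_div, mul_div_cancel_right₀ _ hx.ne']
  exact hdiff

lemma isEquivalent_log_one_add_mul_log {a : ℝ} (ha : 0 < a) :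
    (fun N : ℕ => log (1 + a * log N)) ~[atTop] fun N => log (log N) :=
  (isEquivalent_log_add_mul ha 1).comp_tendsto (tendsto_log_atTop.comp tendsto_natCast_atTop_atTop)

lemma tendsto_log_log_natCast_atTop : Tendsto (fun N : ℕ => log (log N)) atTop atTop :=
  tendsto_log_atTop.comp (tendsto_log_atTop.comp tendsto_natCast_atTop_atTop)

lemma isEquivalent_log_one_add_mul_log_add_const {a : ℝ} (ha : 0 < a) (K : ℝ) :
    (fun N : ℕ => log (1 + a * log N) + K) ~[atTop] fun N => log (log N) :=
  (isEquivalent_log_one_add_mul_log ha).add_isLittleO <| isLittleO_const_left.mpr <| Or.inr <|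
    tendsto_norm_atTop_atTop.comp tendsto_log_log_natCast_atTop

lemma isEquivalent_one_sub_exp_mul_log_one_add {C k a : ℝ} (hC : 0 < C) (hk : 0 < k)
    (ha : 0 < a) :
    (fun N : ℕ => (1 - exp (-(N * (C * exp (-(k * (log N / (2 * k)))))))) *
      log (1 + a * (log N / (2 * k)))) ~[atTop] fun N => log (log N) := by
  have hsqrt : Tendsto (fun N : ℕ => C * exp (log N / 2)) atTop atTop :=
    (tendsto_exp_atTop.comp ((tendsto_log_atTop.comp tendsto_natCast_atTop_atTop).atTop_div_const
      two_pos)).const_mul_atTop hC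
  have h0 : Tendsto (fun N : ℕ => exp (-(N * (C * exp (-(k * (log N / (2 * k)))))))) atTop
      (𝓝 0) := by
    refine tendsto_exp_atBot.comp (tendsto_neg_atTop_atBot.comp (hsqrt.congr' ?_))
    filter_upwards [eventually_gt_atTop 0] with N hN
    have hN' : (0 : ℝ) < N := by exact_mod_cast hN
    calc C * exp (log N / 2) = exp (log N) * (C * exp (-(log N / 2))) := by
          rw [mul_left_comm, ← exp_add]; ring_nf
      _ = N * (C * exp (-(k * (log N / (2 * k))))) := by
          rw [exp_log hN']
          field_simp
  have h1 : (fun N : ℕ => 1 - exp (-(N * (C * exp (-(k * (log N / (2 * k)))))))) ~[atTop]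
      fun _ => (1 : ℝ) :=
    (isEquivalent_const_iff_tendsto one_ne_zero).mpr (by simpa using h0.const_sub 1)
  have h2 : (fun N : ℕ => log (1 + a * (log N / (2 * k)))) ~[atTop] fun N => log (log N) := by
    refine (isEquivalent_log_one_add_mul_log (a := a / (2 * k)) (by positivity)).congr_left ?_
    filter_upwards with N
    ring_nf
  simpa only [Pi.mul_def, one_mul] using h1.mul h2

lemma tendsto_div_of_isEquivalent_of_le_of_le {α : Type*} {l : Filter α} {f lo up D : α → ℝ}
    (hlo : lo ~[l] D) (hup : up ~[l] D) (hD : ∀ᶠ x in l, 0 < D x)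
    (hlo_le : ∀ᶠ x in l, lo x ≤ f x) (hle_up : ∀ᶠ x in l, f x ≤ up x) :
    Tendsto (fun x => f x / D x) l (𝓝 1) := by
  have hD' : ∀ᶠ x in l, D x ≠ 0 := hD.mono fun x hx => hx.ne'
  refine tendsto_of_tendsto_of_tendsto_of_le_of_le' ((isEquivalent_iff_tendsto_one hD').mp hlo)
    ((isEquivalent_iff_tendsto_one hD').mp hup) ?_ ?_
  · filter_upwards [hD, hlo_le] with x hx h
    exact div_le_div_of_nonneg_right h hx.le
  · filter_upwards [hD, hle_up] with x hx h
    exact div_le_div_of_nonneg_right h hx.le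

section Chernoff

variable {μ : Measure ℝ} {s : ℝ}

lemma integrable_max_sub_of_integrable_exp (hs : 0 < s)
    (h : Integrable (fun x => exp (s * x)) μ) (b : ℝ) :
    Integrable (fun x => max (x - b) 0) μ :=
  (h.const_mul (exp (-(s * b)) / s)).mono' (by fun_prop) (ae_of_all _ fun x => by
    rw [norm_of_nonneg (le_max_right _ _)]
    exact max_sub_le_exp_mul hs b x)

lemma integral_max_sub_le_of_integrable_exp (hs : 0 < s)
    (h : Integrable (fun x => exp (s * x)) μ) (b : ℝ) :
    ∫ x, max (x - b) 0 ∂μ ≤ exp (-(s * b)) / s * ∫ x, exp (s * x) ∂μ := by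
  rw [← integral_const_mul]
  exact integral_mono (integrable_max_sub_of_integrable_exp hs h b) (h.const_mul _)
    fun x => max_sub_le_exp_mul hs b x

end Chernoff

section GammaMeasure

variable {a r : ℝ}

lemma measurable_gammaPDF : Measurable (gammaPDF a r) :=
  (measurable_gammaPDFReal a r).ennreal_ofReal

lemma gammaMeasure_Iio_zero : gammaMeasure a r (Iio 0) = 0 := by
  rw [gammaMeasure, withDensity_apply _ measurableSet_Iio]
  exact lintegral_gammaPDF_of_nonpos le_rfl

lemma gammaPDF_mul_exp (ha : 0 ≤ a) (hr : 0 ≤ r) {s : ℝ} (hsr : s < r) (x : ℝ) :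
    gammaPDF a r x * ENNReal.ofReal (exp (s * x)) =
      ENNReal.ofReal ((r / (r - s)) ^ a) * gammaPDF a (r - s) x := by
  have hrs : 0 < r - s := sub_pos.mpr hsr
  have hΓ := Gamma_nonneg_of_nonneg ha
  rcases lt_or_ge x 0 with hx | hx
  · simp [gammaPDF_of_neg hx]
  rw [gammaPDF_of_nonneg hx, gammaPDF_of_nonneg hx, ← ENNReal.ofReal_mul (by positivity),
    ← ENNReal.ofReal_mul (by positivity)]
  congr 1
  rw [div_rpow hr hrs.le]
  have : (r - s) ^ a ≠ 0 := (rpow_pos_of_pos hrs a).ne'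
  field_simp
  rw [mul_assoc, mul_assoc, ← exp_add]
  ring_nf

lemma lintegral_exp_mul_gammaMeasure (ha : 0 < a) (hr : 0 ≤ r) {s : ℝ} (hsr : s < r) :
    ∫⁻ x, ENNReal.ofReal (exp (s * x)) ∂gammaMeasure a r = ENNReal.ofReal ((r / (r - s)) ^ a) := by
  rw [gammaMeasure, lintegral_withDensity_eq_lintegral_mul _ measurable_gammaPDF (by fun_prop)]
  simp_rw [Pi.mul_apply, gammaPDF_mul_exp ha.le hr hsr]
  rw [lintegral_const_mul _ measurable_gammaPDF, lintegral_gammaPDF_eq_one ha (sub_pos.mpr hsr),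
    mul_one]

lemma integrable_exp_mul_gammaMeasure (ha : 0 < a) (hr : 0 ≤ r) {s : ℝ} (hsr : s < r) :
    Integrable (fun x => exp (s * x)) (gammaMeasure a r) := by
  refine ⟨by fun_prop, ?_⟩
  simp_rw [hasFiniteIntegral_iff_ofReal (ae_of_all _ fun x => (exp_pos (s * x)).le),
    lintegral_exp_mul_gammaMeasure ha hr hsr]
  exact ENNReal.ofReal_lt_top

lemma gammaPDFReal_ge (ha : 0 ≤ a) (hr : 0 ≤ r) {x : ℝ} (hx : 1 ≤ x) :
    r ^ a / Gamma a * exp (-((r + 1) * x)) ≤ gammaPDFReal a r x := by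
  have hx0 : 0 < x := by linarith
  have hpow : exp (-x) ≤ x ^ (a - 1) :=
    calc exp (-x) ≤ x⁻¹ := by
          rw [exp_neg]
          exact inv_anti₀ hx0 (by linarith [add_one_le_exp x])
      _ = x ^ (-1 : ℝ) := (rpow_neg_one x).symm
      _ ≤ x ^ (a - 1) := rpow_le_rpow_of_exponent_le hx (by linarith)
  rw [gammaPDFReal, if_pos hx0.le, mul_assoc]
  have := Gamma_nonneg_of_nonneg ha
  gcongr
  calc exp (-((r + 1) * x)) = exp (-x) * exp (-(r * x)) := by rw [← exp_add]; ring_nf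
    _ ≤ x ^ (a - 1) * exp (-(r * x)) := by gcongr

lemma gammaMeasure_Ici_ge (ha : 0 ≤ a) (hr : 0 ≤ r) {t : ℝ} (ht : 0 ≤ t) :
    ENNReal.ofReal (r ^ a / Gamma a * exp (-(2 * (r + 1))) * exp (-((r + 1) * t))) ≤
      gammaMeasure a r (Ici t) := by
  set p := r ^ a / Gamma a * exp (-(2 * (r + 1))) * exp (-((r + 1) * t))
  have hp : ∀ x ∈ Icc (t + 1) (t + 2), ENNReal.ofReal p ≤ gammaPDF a r x := by
    rintro x ⟨hx1, hx2⟩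
    refine ENNReal.ofReal_le_ofReal (le_trans ?_ (gammaPDFReal_ge ha hr (by linarith)))
    have := Gamma_nonneg_of_nonneg ha
    calc p = r ^ a / Gamma a * exp (-((r + 1) * (t + 2))) := by
          simp only [p, mul_assoc, ← exp_add]; ring_nf
      _ ≤ r ^ a / Gamma a * exp (-((r + 1) * x)) := by gcongr
  calc ENNReal.ofReal p = ∫⁻ _ in Icc (t + 1) (t + 2), ENNReal.ofReal p := by
        rw [setLIntegral_const, Real.volume_Icc]; ring_nf; simp
    _ ≤ ∫⁻ x in Icc (t + 1) (t + 2), gammaPDF a r x := setLIntegral_mono measurable_gammaPDF hp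
    _ ≤ ∫⁻ x in Ici t, gammaPDF a r x := lintegral_mono_set fun x hx => by
        simp only [mem_Icc, mem_Ici] at hx ⊢; linarith [hx.1]
    _ = gammaMeasure a r (Ici t) := (withDensity_apply _ measurableSet_Ici).symm

end GammaMeasure

section IID

variable {Ω : Type*} [MeasurableSpace Ω] {P : Measure Ω} {N L : ℕ} {W : Fin N → Ω → ℝ}
  {μ : Measure ℝ} {b c t : ℝ}

lemma ae_nonneg_of_map_eq (hW : ∀ n, Measurable (W n)) (hlaw : ∀ n, P.map (W n) = μ)
    (hμ : μ (Iio 0) = 0) : ∀ᵐ ω ∂P, ∀ n, 0 ≤ W n ω := by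
  rw [ae_all_iff]
  intro n
  have : P (W n ⁻¹' Iio 0) = 0 := by
    rw [← Measure.map_apply (hW n) measurableSet_Iio, hlaw n, hμ]
  filter_upwards [measure_eq_zero_iff_ae_notMem.mp this] with ω hω
  simpa using hω

lemma integrable_max_sub_of_map_eq (hW : ∀ n, Measurable (W n)) (hlaw : ∀ n, P.map (W n) = μ)
    (hint : Integrable (fun x => max (x - b) 0) μ) (n : Fin N) :
    Integrable (fun ω => max (W n ω - b) 0) P :=
  ((hlaw n).symm ▸ hint).comp_aemeasurable (hW n).aemeasurable

lemma integrable_log_one_add_mul_topSum [IsFiniteMeasure P] (hc : 0 ≤ c) (hb : 0 ≤ b)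
    (hLN : L ≤ N) (hW : ∀ n, Measurable (W n)) (hlaw : ∀ n, P.map (W n) = μ)
    (hμ : μ (Iio 0) = 0) (hint : Integrable (fun x => max (x - b) 0) μ) :
    Integrable (fun ω => log (1 + c * topSum L fun n => W n ω)) P := by
  have hsum := integrable_finsetSum Finset.univ fun n _ =>
    integrable_max_sub_of_map_eq hW hlaw hint n
  refine Integrable.mono' (g := fun ω => log (1 + c * (L * b)) + c * ∑ n, max (W n ω - b) 0)
    ((integrable_const _).add (hsum.const_mul c))
    ((measurable_topSum hLN hW).const_mul c |>.const_add 1).log.aestronglyMeasurable ?_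
  filter_upwards [ae_nonneg_of_map_eq hW hlaw hμ] with ω hω
  rw [norm_of_nonneg (log_nonneg (by nlinarith [topSum_nonneg _ hLN hω]))]
  exact log_one_add_mul_topSum_le hc hb hLN hω

lemma integral_log_one_add_mul_topSum_le [IsProbabilityMeasure P] (hc : 0 ≤ c) (hb : 0 ≤ b)
    (hLN : L ≤ N) (hW : ∀ n, Measurable (W n)) (hlaw : ∀ n, P.map (W n) = μ)
    (hμ : μ (Iio 0) = 0) (hint : Integrable (fun x => max (x - b) 0) μ) :
    ∫ ω, log (1 + c * topSum L fun n => W n ω) ∂P ≤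
      log (1 + c * (L * b)) + c * (N * ∫ x, max (x - b) 0 ∂μ) := by
  have hsum := integrable_finsetSum Finset.univ fun n _ =>
    integrable_max_sub_of_map_eq hW hlaw hint n
  have hlaw_int : ∀ n, ∫ ω, max (W n ω - b) 0 ∂P = ∫ x, max (x - b) 0 ∂μ := fun n => by
    rw [← hlaw n, integral_map (hW n).aemeasurable (by fun_prop)]
  calc ∫ ω, log (1 + c * topSum L fun n => W n ω) ∂P
      ≤ ∫ ω, (log (1 + c * (L * b)) + c * ∑ n, max (W n ω - b) 0) ∂P := by
        refine integral_mono_ae (integrable_log_one_add_mul_topSum hc hb hLN hW hlaw hμ hint)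
          ((integrable_const _).add (hsum.const_mul c)) ?_
        filter_upwards [ae_nonneg_of_map_eq hW hlaw hμ] with ω hω
        exact log_one_add_mul_topSum_le hc hb hLN hω
    _ = log (1 + c * (L * b)) + c * (N * ∫ x, max (x - b) 0 ∂μ) := by
        rw [integral_add (integrable_const _) (hsum.const_mul c), integral_const_mul,
          integral_finsetSum _ fun n _ => integrable_max_sub_of_map_eq hW hlaw hint n]
        simp [hlaw_int]

lemma measureReal_iInter_preimage_Iio [IsProbabilityMeasure μ] (hindep : iIndepFun W P)
    (hW : ∀ n, Measurable (W n)) (hlaw : ∀ n, P.map (W n) = μ) :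
    P.real (⋂ n, W n ⁻¹' Iio t) = (1 - μ.real (Ici t)) ^ N := by
  have h := (iIndepFun_iff_measure_inter_preimage_eq_mul.mp hindep) Finset.univ
    (sets := fun _ => Iio t) fun _ _ => measurableSet_Iio
  simp only [Finset.mem_univ, iInter_true] at h
  rw [measureReal_def, h, ← probReal_compl_eq_one_sub measurableSet_Ici, compl_Ici]
  simp [measureReal_def, ← Measure.map_apply (hW _) measurableSet_Iio, hlaw]

lemma le_integral_log_one_add_mul_topSum [IsProbabilityMeasure P] [IsProbabilityMeasure μ]
    (hc : 0 ≤ c) (ht : 0 ≤ t) (hL : 1 ≤ L) (hLN : L ≤ N) (hindep : iIndepFun W P)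
    (hW : ∀ n, Measurable (W n)) (hlaw : ∀ n, P.map (W n) = μ) (hμ : μ (Iio 0) = 0)
    (hint : Integrable (fun ω => log (1 + c * topSum L fun n => W n ω)) P) :
    (1 - (1 - μ.real (Ici t)) ^ N) * log (1 + c * t) ≤
      ∫ ω, log (1 + c * topSum L fun n => W n ω) ∂P := by
  set B := ⋂ n, W n ⁻¹' Iio t
  have hB : MeasurableSet B := MeasurableSet.iInter fun n => hW n measurableSet_Iio
  calc (1 - (1 - μ.real (Ici t)) ^ N) * log (1 + c * t)
      = ∫ ω, Bᶜ.indicator (fun _ => log (1 + c * t)) ω ∂P := by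
        rw [integral_indicator_const _ hB.compl, probReal_compl_eq_one_sub hB,
          measureReal_iInter_preimage_Iio hindep hW hlaw, smul_eq_mul]
    _ ≤ ∫ ω, log (1 + c * topSum L fun n => W n ω) ∂P := by
        refine integral_mono_ae ((integrable_const _).indicator hB.compl) hint ?_
        filter_upwards [ae_nonneg_of_map_eq hW hlaw hμ] with ω hω
        have hT := topSum_nonneg _ hLN hω
        by_cases hωB : ω ∈ B
        · rw [indicator_of_notMem (notMem_compl_iff.mpr hωB)]
          exact log_nonneg (by nlinarith)
        · obtain ⟨n, hn⟩ : ∃ n, t ≤ W n ω := by simpa [B] using hωB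
          rw [indicator_of_mem hωB]
          gcongr
          exact le_topSum_of_le _ hL hLN hω hn

end IID

section GammaSample

variable {Ω : Type*} [MeasurableSpace Ω] {P : Measure Ω} [IsProbabilityMeasure P] {N L : ℕ}
  {W : Fin N → Ω → ℝ} {m c : ℝ}

lemma integral_log_one_add_mul_topSum_le_of_gamma (hm : 0 < m) (hc : 0 ≤ c) (hN : 0 < N)
    (hLN : L ≤ N) (hW : ∀ n, Measurable (W n)) (hlaw : ∀ n, P.map (W n) = gammaMeasure m m) :
    ∫ ω, log (1 + c * topSum L fun n => W n ω) ∂P ≤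
      log (1 + c * L * (2 / m) * log N) +
        c * (2 / m * ∫ x, exp (m / 2 * x) ∂gammaMeasure m m) := by
  have hexp := integrable_exp_mul_gammaMeasure hm hm.le (half_lt_self hm)
  set b := 2 / m * log N
  have hb : 0 ≤ b := by have := log_natCast_nonneg N; positivity
  have hN' : (0 : ℝ) < N := by exact_mod_cast hN
  calc ∫ ω, log (1 + c * topSum L fun n => W n ω) ∂P
      ≤ log (1 + c * (L * b)) + c * (N * ∫ x, max (x - b) 0 ∂gammaMeasure m m) :=
        integral_log_one_add_mul_topSum_le hc hb hLN hW hlaw gammaMeasure_Iio_zero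
          (integrable_max_sub_of_integrable_exp (half_pos hm) hexp b)
    _ ≤ log (1 + c * (L * b)) +
          c * (N * (exp (-(m / 2 * b)) / (m / 2) * ∫ x, exp (m / 2 * x) ∂gammaMeasure m m)) := by
        gcongr
        exact integral_max_sub_le_of_integrable_exp (half_pos hm) hexp b
    _ = _ := by
        have : m / 2 * b = log N := by simp only [b]; field_simp
        rw [this, exp_neg, exp_log hN']
        congr 2
        · simp only [b]; ring
        · field_simp

lemma le_integral_log_one_add_mul_topSum_of_gamma (hm : 0 < m) (hc : 0 ≤ c) {t : ℝ} (ht : 0 ≤ t)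
    (hL : 1 ≤ L) (hLN : L ≤ N) (hindep : iIndepFun W P) (hW : ∀ n, Measurable (W n))
    (hlaw : ∀ n, P.map (W n) = gammaMeasure m m) :
    (1 - exp (-(N * (m ^ m / Gamma m * exp (-(2 * (m + 1))) * exp (-((m + 1) * t)))))) *
        log (1 + c * t) ≤ ∫ ω, log (1 + c * topSum L fun n => W n ω) ∂P := by
  have := isProbabilityMeasure_gammaMeasure hm hm
  have hint := integrable_log_one_add_mul_topSum hc le_rfl hLN hW hlaw gammaMeasure_Iio_zero
    (integrable_max_sub_of_integrable_exp (half_pos hm)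
      (integrable_exp_mul_gammaMeasure hm hm.le (half_lt_self hm)) 0)
  have htail := (ENNReal.ofReal_le_iff_le_toReal (measure_ne_top _ _)).mp
    (gammaMeasure_Ici_ge hm.le hm.le ht)
  refine le_trans ?_ (le_integral_log_one_add_mul_topSum hc ht hL hLN hindep hW hlaw
    gammaMeasure_Iio_zero hint)
  have : 0 ≤ log (1 + c * t) := log_nonneg (by nlinarith)
  gcongr
  exact one_sub_pow_le_exp_neg_mul htail measureReal_le_one N

end GammaSample

theorem stmt0
    (m ρ β : ℝ) (hm : 1 / 2 ≤ m) (hρ : 0 < ρ) (hβ : 0 < β)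
    (L : ℕ) (hL : 1 ≤ L)
    (Ω : ℕ → Type) [∀ N, MeasurableSpace (Ω N)]
    (P : ∀ N, Measure (Ω N)) [∀ N, IsProbabilityMeasure (P N)]
    (W : ∀ N : ℕ, Fin N → Ω N → ℝ)
    (hmeas : ∀ N : ℕ, L < N → ∀ n : Fin N, Measurable (W N n))
    (hindep : ∀ N : ℕ, L < N →
      iIndepFun (W N) (P N))
    (hdist : ∀ N : ℕ, L < N → ∀ n : Fin N,
      (P N).map (W N n) = gammaMeasure m m) :
    Tendsto
      (fun N : ℕ =>
        (∫ ω, Real.logb 2 (1 + ρ * β * topSum L (fun n => W N n ω)) ∂(P N)) /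
          Real.logb 2 (1 + ρ * β * ((L : ℝ) / m) * Real.log N))
      atTop (nhds 1) := by
  have hm0 : 0 < m := by linarith
  have hc : 0 < ρ * β := mul_pos hρ hβ
  have hC : 0 < m ^ m / Gamma m * exp (-(2 * (m + 1))) := by positivity
  suffices h : Tendsto (fun N : ℕ => (∫ ω, log (1 + ρ * β * topSum L fun n => W N n ω) ∂P N) /
      log (1 + ρ * β * (L / m) * log N)) atTop (𝓝 1) by
    refine h.congr fun N => ?_
    simp only [logb, integral_div]
    exact (div_div_div_cancel_right₀ (log_pos one_lt_two).ne' _ _).symm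
  have hD := isEquivalent_log_one_add_mul_log (a := ρ * β * (L / m)) (by positivity)
  have hlo := (isEquivalent_one_sub_exp_mul_log_one_add hC (by linarith : 0 < m + 1) hc).trans
    hD.symm
  have hup := (isEquivalent_log_one_add_mul_log_add_const (a := ρ * β * L * (2 / m))
    (by positivity) (ρ * β * (2 / m * ∫ x, exp (m / 2 * x) ∂gammaMeasure m m))).trans hD.symm
  refine tendsto_div_of_isEquivalent_of_le_of_le hlo hup
    (hD.symm.tendsto_atTop tendsto_log_log_natCast_atTop |>.eventually_gt_atTop 0) ?_ ?_
  · -- the shape of `hlo` fixes the threshold `t = log N / (2 (m + 1))`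
    filter_upwards [eventually_gt_atTop L] with N hN
    exact le_integral_log_one_add_mul_topSum_of_gamma hm0 hc.le
      (div_nonneg (log_natCast_nonneg N) (by positivity)) hL hN.le (hindep N hN) (hmeas N hN)
      (hdist N hN)
  · filter_upwards [eventually_gt_atTop L] with N hN
    exact integral_log_one_add_mul_topSum_le_of_gamma hm0 hc.le (by omega) hN.le (hmeas N hN)
      (hdist N hN)
end

section
/- Let m ≥ 1/2 and let L ≥ 1 be a fixed integer. For each N > L, let W_{1,N}, …, W_{N,N} be i.i.d. real random variables, each with the normalized Gamma(m) distribution, and let T_N denote the top-L sum of (W_{1,N}, …, W_{N,N}). Then T_N divided by (L/m) log N converges to 1 in probability as N → ∞. -/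
/-!
The normalized Gamma(m) tail is `P(W ≥ t) = exp(-(m + o(1)) t)`, so each of the `L` largest of
`N` samples is about `log N / m`. Fix `θ` and a small `δ > 0`.
If `θ > 1/m` and the top-`L` sum reaches `L θ log N`, some sample reaches `θ log N`, which by the
union bound has probability at most `N exp(-(m - δ) θ log N) → 0`.
If `θ < 1/m` and the top-`L` sum stays below `L θ log N`, fewer than `L` samples reach `θ log N`,
so some `N + 1 - L` of them stay below it. By independence and the union bound over these index
sets, this has probability at most `N^(L-1) (1 - p)^(N+1-L)` with `p ≥ c N^(-(m + δ) θ)`, hence at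
most `N^(L-1) exp(-c N^κ / 2)` with `κ = 1 - (m + δ) θ > 0`.
-/

open MeasureTheory ProbabilityTheory Filter Real

open Set
open scoped ENNReal Topology

section TopSum

variable {N L : ℕ} (w : Fin N → ℝ)

lemma finite_setOf_sum_card_eq :
    {x : ℝ | ∃ S : Finset (Fin N), S.card = L ∧ x = ∑ n ∈ S, w n}.Finite :=
  (finite_range fun S : Finset (Fin N) => ∑ n ∈ S, w n).subset fun _ ⟨S, _, hx⟩ => ⟨S, hx.symm⟩

lemma sum_le_topSum {S : Finset (Fin N)} (hS : S.card = L) : ∑ n ∈ S, w n ≤ topSum L w :=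
  le_csSup (finite_setOf_sum_card_eq w).bddAbove ⟨S, hS, rfl⟩

lemma exists_topSum_eq_sum (hLN : L ≤ N) :
    ∃ S : Finset (Fin N), S.card = L ∧ topSum L w = ∑ n ∈ S, w n := by
  obtain ⟨S, -, hS⟩ := Finset.exists_subset_card_eq (s := (Finset.univ : Finset (Fin N)))
    (by simpa using hLN)
  have hne : {x : ℝ | ∃ S : Finset (Fin N), S.card = L ∧ x = ∑ n ∈ S, w n}.Nonempty :=
    ⟨_, S, hS, rfl⟩
  exact hne.csSup_mem (finite_setOf_sum_card_eq w)

lemma exists_le_of_mul_le_topSum (hL : 1 ≤ L) (hLN : L ≤ N) {t : ℝ}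
    (h : L * t ≤ topSum L w) : ∃ n, t ≤ w n := by
  obtain ⟨S, hS, hsum⟩ := exists_topSum_eq_sum w hLN
  by_contra! hlt
  have : ∑ n ∈ S, w n < ∑ _n ∈ S, t :=
    Finset.sum_lt_sum_of_nonempty (Finset.card_pos.mp (by omega)) fun n _ => hlt n
  rw [Finset.sum_const, hS, nsmul_eq_mul] at this
  linarith

lemma exists_card_eq_forall_lt_of_topSum_lt {s : ℝ} (h : topSum L w < L * s) :
    ∃ S : Finset (Fin N), S.card = N + 1 - L ∧ ∀ n ∈ S, w n < s := by
  classical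
  set F := Finset.univ.filter fun n => s ≤ w n
  have hF : F.card < L := by
    by_contra! hLF
    obtain ⟨S, hSF, hS⟩ := Finset.exists_subset_card_eq hLF
    have : (L : ℝ) * s ≤ ∑ n ∈ S, w n := by
      simpa [hS] using Finset.card_nsmul_le_sum S w s fun n hn => (Finset.mem_filter.mp (hSF hn)).2
    linarith [sum_le_topSum w hS]
  obtain ⟨S, hSF, hS⟩ := Finset.exists_subset_card_eq (s := Fᶜ) (n := N + 1 - L)
    (by rw [Finset.card_compl, Fintype.card_fin]; omega)
  exact ⟨S, hS, fun n hn => by simpa [F] using hSF hn⟩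

end TopSum

section GammaTail

variable {a r β : ℝ}

lemma eventually_rpow_le_exp_mul (p : ℝ) {δ : ℝ} (hδ : 0 < δ) :
    ∀ᶠ x in atTop, x ^ p ≤ exp (δ * x) := by
  filter_upwards [(tendsto_rpow_mul_exp_neg_mul_atTop_nhds_zero p δ hδ).eventually
    (gt_mem_nhds zero_lt_one)] with x hx
  calc x ^ p = x ^ p * exp (-δ * x) * exp (δ * x) := by
        rw [mul_assoc, ← exp_add]; simp
    _ ≤ 1 * exp (δ * x) := by gcongr
    _ = exp (δ * x) := one_mul _

lemma eventually_gammaPDFReal_le (ha : 0 < a) (hr : 0 < r) (hβ : β < r) :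
    ∀ᶠ x in atTop, gammaPDFReal a r x ≤ r ^ a / Gamma a * exp (-β * x) := by
  have hK : 0 ≤ r ^ a / Gamma a := div_nonneg (rpow_nonneg hr.le a) (Gamma_pos_of_pos ha).le
  filter_upwards [eventually_ge_atTop 0, eventually_rpow_le_exp_mul (a - 1) (sub_pos.2 hβ)]
    with x hx hpow
  rw [gammaPDFReal, if_pos hx, mul_assoc]
  gcongr
  calc x ^ (a - 1) * exp (-(r * x)) ≤ exp ((r - β) * x) * exp (-(r * x)) := by gcongr
    _ = exp (-β * x) := by rw [← exp_add]; ring_nf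

lemma eventually_le_gammaPDFReal (ha : 0 < a) (hr : 0 < r) (hβ : r < β) :
    ∀ᶠ x in atTop, r ^ a / Gamma a * exp (-β * x) ≤ gammaPDFReal a r x := by
  have hK : 0 ≤ r ^ a / Gamma a := div_nonneg (rpow_nonneg hr.le a) (Gamma_pos_of_pos ha).le
  filter_upwards [eventually_gt_atTop 0, eventually_rpow_le_exp_mul (1 - a) (sub_pos.2 hβ)]
    with x hx hpow
  rw [gammaPDFReal, if_pos hx.le, mul_assoc]
  gcongr
  have hrpow : exp (-((β - r) * x)) ≤ x ^ (a - 1) := by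
    rw [show a - 1 = -(1 - a) by ring, rpow_neg hx.le, exp_neg]
    gcongr
  calc exp (-β * x) = exp (-((β - r) * x)) * exp (-(r * x)) := by rw [← exp_add]; ring_nf
    _ ≤ x ^ (a - 1) * exp (-(r * x)) := by gcongr

lemma exists_gammaMeasure_Ici_le (ha : 0 < a) (hr : 0 < r) (hβ₀ : 0 < β) (hβ : β < r) :
    ∃ C, ∀ᶠ t in atTop, gammaMeasure a r (Ici t) ≤ ENNReal.ofReal (C * exp (-β * t)) := by
  set K := r ^ a / Gamma a
  have hK : 0 ≤ K := div_nonneg (rpow_nonneg hr.le a) (Gamma_pos_of_pos ha).le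
  obtain ⟨T, hT⟩ := eventually_atTop.1 (eventually_gammaPDFReal_le ha hr hβ)
  refine ⟨K / β, ?_⟩
  filter_upwards [eventually_ge_atTop T] with t ht
  have hint : IntegrableOn (fun x => K * exp (-β * x)) (Ici t) := by
    rw [integrableOn_Ici_iff_integrableOn_Ioi]
    exact (exp_neg_integrableOn_Ioi t hβ₀).const_mul K
  calc gammaMeasure a r (Ici t) = ∫⁻ x in Ici t, gammaPDF a r x :=
        withDensity_apply _ measurableSet_Ici
    _ ≤ ∫⁻ x in Ici t, ENNReal.ofReal (K * exp (-β * x)) :=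
        setLIntegral_mono' measurableSet_Ici fun x hx =>
          ENNReal.ofReal_le_ofReal (hT x (ht.trans hx))
    _ = ENNReal.ofReal (∫ x in Ici t, K * exp (-β * x)) :=
        (ofReal_integral_eq_lintegral_ofReal hint (ae_of_all _ fun x => by positivity)).symm
    _ = ENNReal.ofReal (K / β * exp (-β * t)) := by
        rw [integral_Ici_eq_integral_Ioi, integral_const_mul,
          integral_exp_mul_Ioi (neg_neg_of_pos hβ₀)]
        ring_nf

lemma exists_le_gammaMeasure_Ici (ha : 0 < a) (hr : 0 < r) (hβ : r < β) :
    ∃ c > 0, ∀ᶠ t in atTop, ENNReal.ofReal (c * exp (-β * t)) ≤ gammaMeasure a r (Ici t) := by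
  set K := r ^ a / Gamma a
  have hK : 0 < K := div_pos (rpow_pos_of_pos hr a) (Gamma_pos_of_pos ha)
  obtain ⟨T, hT⟩ := eventually_atTop.1 (eventually_le_gammaPDFReal ha hr hβ)
  refine ⟨K * exp (-β), by positivity, ?_⟩
  filter_upwards [eventually_ge_atTop T] with t ht
  calc ENNReal.ofReal (K * exp (-β) * exp (-β * t))
      = ∫⁻ _ in Icc t (t + 1), ENNReal.ofReal (K * exp (-β * (t + 1))) := by
        rw [setLIntegral_const, volume_Icc, add_sub_cancel_left, ENNReal.ofReal_one, mul_one,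
          mul_assoc, ← exp_add]
        ring_nf
    _ ≤ ∫⁻ x in Icc t (t + 1), gammaPDF a r x :=
        setLIntegral_mono' measurableSet_Icc fun x hx => ENNReal.ofReal_le_ofReal <|
          le_trans (mul_le_mul_of_nonneg_left (exp_le_exp.2 (by nlinarith [hx.2])) hK.le)
            (hT x (ht.trans hx.1))
    _ = gammaMeasure a r (Icc t (t + 1)) := (withDensity_apply _ measurableSet_Icc).symm
    _ ≤ gammaMeasure a r (Ici t) := measure_mono Icc_subset_Ici_self

end GammaTail

lemma measure_exists_card_eq_forall_mem_le {Ω ι α : Type*} [MeasurableSpace Ω]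
    [MeasurableSpace α] [Fintype ι] {P : Measure Ω} {X : ι → Ω → α} {μ : Measure α}
    (hX : ∀ i, Measurable (X i)) (hind : iIndepFun X P) (hμ : ∀ i, P.map (X i) = μ)
    {A : Set α} (hA : MeasurableSet A) (k : ℕ) :
    P {ω | ∃ S : Finset ι, S.card = k ∧ ∀ i ∈ S, X i ω ∈ A} ≤
      (Fintype.card ι).choose k * μ A ^ k := by
  have hsub : {ω | ∃ S : Finset ι, S.card = k ∧ ∀ i ∈ S, X i ω ∈ A} ⊆
      ⋃ S ∈ Finset.powersetCard k Finset.univ, ⋂ i ∈ S, X i ⁻¹' A := by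
    rintro ω ⟨S, hS, hmem⟩
    exact mem_biUnion (Finset.mem_powersetCard.2 ⟨Finset.subset_univ S, hS⟩) (mem_iInter₂.2 hmem)
  have hinter : ∀ S ∈ Finset.powersetCard k Finset.univ, P (⋂ i ∈ S, X i ⁻¹' A) = μ A ^ k := by
    intro S hS
    rw [hind.meas_biInter fun i _ => ⟨A, hA, rfl⟩,
      Finset.prod_congr rfl fun i _ => by rw [← Measure.map_apply (hX i) hA, hμ i],
      Finset.prod_const, (Finset.mem_powersetCard.1 hS).2]
  calc _ ≤ P (⋃ S ∈ Finset.powersetCard k Finset.univ, ⋂ i ∈ S, X i ⁻¹' A) := measure_mono hsub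
    _ ≤ ∑ S ∈ Finset.powersetCard k Finset.univ, P (⋂ i ∈ S, X i ⁻¹' A) :=
        measure_biUnion_finset_le _ _
    _ = _ := by
        rw [Finset.sum_congr rfl hinter, Finset.sum_const, Finset.card_powersetCard,
          Finset.card_univ, nsmul_eq_mul]

lemma measure_compl_pow_le_exp_neg {α : Type*} [MeasurableSpace α] {μ : Measure α}
    [IsProbabilityMeasure μ] {A : Set α} (hA : MeasurableSet A) {q : ℝ} (hq : 0 ≤ q)
    (h : ENNReal.ofReal q ≤ μ A) (k : ℕ) : μ Aᶜ ^ k ≤ ENNReal.ofReal (exp (-(q * k))) := by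
  have hcompl : μ Aᶜ ≤ ENNReal.ofReal (exp (-q)) :=
    calc μ Aᶜ = 1 - μ A := prob_compl_eq_one_sub hA
      _ ≤ ENNReal.ofReal 1 - ENNReal.ofReal q := by rw [ENNReal.ofReal_one]; gcongr
      _ = ENNReal.ofReal (1 - q) := (ENNReal.ofReal_sub 1 hq).symm
      _ ≤ ENNReal.ofReal (exp (-q)) :=
          ENNReal.ofReal_le_ofReal (by linarith [add_one_le_exp (-q)])
  calc μ Aᶜ ^ k ≤ ENNReal.ofReal (exp (-q)) ^ k := by gcongr
    _ = ENNReal.ofReal (exp (-(q * k))) := by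
        rw [← ENNReal.ofReal_pow (exp_pos _).le, ← exp_nat_mul]
        ring_nf

lemma tendsto_natCast_pow_mul_exp_neg_mul_rpow (k : ℕ) {b κ : ℝ} (hb : 0 < b) (hκ : 0 < κ) :
    Tendsto (fun N : ℕ => (N : ℝ) ^ k * exp (-(b * (N : ℝ) ^ κ))) atTop (𝓝 0) := by
  have h := (tendsto_rpow_mul_exp_neg_mul_atTop_nhds_zero (k / κ) b hb).comp
    ((tendsto_rpow_atTop hκ).comp tendsto_natCast_atTop_atTop)
  refine h.congr fun N => ?_
  simp [← rpow_mul (Nat.cast_nonneg N), mul_div_cancel₀ _ hκ.ne']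

lemma tendsto_zero_of_le_ofReal {α : Type*} {l : Filter α} {f : α → ℝ≥0∞} {g : α → ℝ}
    (hg : Tendsto g l (𝓝 0)) (hfg : ∀ᶠ x in l, f x ≤ ENNReal.ofReal (g x)) :
    Tendsto f l (𝓝 0) :=
  tendsto_of_tendsto_of_tendsto_of_le_of_le' tendsto_const_nhds
    (by simpa using ENNReal.tendsto_ofReal hg) (Eventually.of_forall fun _ => bot_le) hfg

lemma le_or_le_of_le_abs_div_sub_one {x a ε : ℝ} (ha : 0 < a) (h : ε ≤ |x / a - 1|) :
    (1 + ε) * a ≤ x ∨ x ≤ (1 - ε) * a := by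
  rcases le_abs'.1 h with h | h
  · exact Or.inr ((div_le_iff₀ ha).1 (by linarith))
  · exact Or.inl ((le_div_iff₀ ha).1 (by linarith))

section TopSumDeviation

variable {Ω : Type*} [MeasurableSpace Ω] {P : Measure Ω} {N L : ℕ} {X : Fin N → Ω → ℝ}
  {μ : Measure ℝ}

lemma measure_mul_le_topSum_le (hL : 1 ≤ L) (hLN : L ≤ N) (hX : ∀ n, Measurable (X n))
    (hind : iIndepFun X P) (hμ : ∀ n, P.map (X n) = μ) (t : ℝ) :
    P {ω | L * t ≤ topSum L fun n => X n ω} ≤ N * μ (Ici t) := by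
  have hsub : {ω | L * t ≤ topSum L fun n => X n ω} ⊆
      {ω | ∃ S : Finset (Fin N), S.card = 1 ∧ ∀ n ∈ S, X n ω ∈ Ici t} := fun ω hω => by
    obtain ⟨n, hn⟩ := exists_le_of_mul_le_topSum _ hL hLN hω
    exact ⟨{n}, Finset.card_singleton n, by simpa using hn⟩
  simpa using (measure_mono hsub).trans
    (measure_exists_card_eq_forall_mem_le hX hind hμ measurableSet_Ici 1)

lemma measure_topSum_lt_mul_le (hL : 1 ≤ L) (hLN : L ≤ N) (hX : ∀ n, Measurable (X n))
    (hind : iIndepFun X P) (hμ : ∀ n, P.map (X n) = μ) (s : ℝ) :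
    P {ω | (topSum L fun n => X n ω) < L * s} ≤ N ^ (L - 1) * μ (Iio s) ^ (N + 1 - L) := by
  have hsub : {ω | (topSum L fun n => X n ω) < L * s} ⊆
      {ω | ∃ S : Finset (Fin N), S.card = N + 1 - L ∧ ∀ n ∈ S, X n ω ∈ Iio s} := fun ω hω =>
    exists_card_eq_forall_lt_of_topSum_lt _ hω
  have hchoose : N.choose (N + 1 - L) ≤ N ^ (L - 1) := by
    rw [show N + 1 - L = N - (L - 1) by omega, Nat.choose_symm (by omega)]
    exact Nat.choose_le_pow _ _
  calc _ ≤ N.choose (N + 1 - L) * μ (Iio s) ^ (N + 1 - L) := by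
        simpa using (measure_mono hsub).trans
          (measure_exists_card_eq_forall_mem_le hX hind hμ measurableSet_Iio (N + 1 - L))
    _ ≤ N ^ (L - 1) * μ (Iio s) ^ (N + 1 - L) := by gcongr; exact_mod_cast hchoose

end TopSumDeviation

lemma tendsto_const_mul_log_natCast_atTop {θ : ℝ} (hθ : 0 < θ) :
    Tendsto (fun N : ℕ => θ * log N) atTop atTop :=
  (tendsto_log_atTop.comp tendsto_natCast_atTop_atTop).const_mul_atTop hθ

lemma exp_neg_mul_mul_log {x : ℝ} (hx : 0 < x) (β θ : ℝ) :
    exp (-β * (θ * log x)) = x ^ (-(β * θ)) := by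
  rw [rpow_def_of_pos hx]
  ring_nf

section Concentration

variable {a r : ℝ} {L : ℕ} {Ω : ℕ → Type*} [∀ N, MeasurableSpace (Ω N)] {P : ∀ N, Measure (Ω N)}
  {W : ∀ N : ℕ, Fin N → Ω N → ℝ}

lemma tendsto_measure_mul_le_topSum (ha : 0 < a) (hr : 0 < r) (hL : 1 ≤ L)
    (hmeas : ∀ N : ℕ, L < N → ∀ n : Fin N, Measurable (W N n))
    (hindep : ∀ N : ℕ, L < N → iIndepFun (W N) (P N))
    (hdist : ∀ N : ℕ, L < N → ∀ n : Fin N, (P N).map (W N n) = gammaMeasure a r)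
    {θ : ℝ} (hθ : r⁻¹ < θ) :
    Tendsto (fun N : ℕ => P N {ω | L * (θ * log N) ≤ topSum L fun n => W N n ω})
      atTop (𝓝 0) := by
  have hθ₀ : 0 < θ := (inv_pos.2 hr).trans hθ
  obtain ⟨β, hβθ, hβ⟩ := exists_between ((inv_lt_comm₀ hr hθ₀).1 hθ)
  have hγ : 0 < β * θ - 1 := sub_pos.2 ((inv_lt_iff_one_lt_mul₀ hθ₀).1 hβθ)
  obtain ⟨C, hC⟩ := exists_gammaMeasure_Ici_le ha hr ((inv_pos.2 hθ₀).trans hβθ) hβ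
  have hlim : Tendsto (fun N : ℕ => C * (N : ℝ) ^ (-(β * θ - 1))) atTop (𝓝 0) := by
    simpa using ((tendsto_rpow_neg_atTop hγ).comp tendsto_natCast_atTop_atTop).const_mul C
  refine tendsto_zero_of_le_ofReal hlim ?_
  filter_upwards [(tendsto_const_mul_log_natCast_atTop hθ₀).eventually hC, eventually_gt_atTop L]
    with N hCN hLN
  have hN : (0 : ℝ) < N := by exact_mod_cast (Nat.zero_le L).trans_lt hLN
  calc P N _ ≤ N * gammaMeasure a r (Ici (θ * log N)) :=
        measure_mul_le_topSum_le hL hLN.le (hmeas N hLN) (hindep N hLN) (hdist N hLN) _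
    _ ≤ N * ENNReal.ofReal (C * exp (-β * (θ * log N))) := by gcongr
    _ = ENNReal.ofReal (C * (N : ℝ) ^ (-(β * θ - 1))) := by
        rw [← ENNReal.ofReal_natCast, ← ENNReal.ofReal_mul hN.le, exp_neg_mul_mul_log hN,
          show -(β * θ - 1) = 1 + -(β * θ) by ring, rpow_add hN, rpow_one]
        ring_nf

lemma tendsto_measure_topSum_lt_mul (ha : 0 < a) (hr : 0 < r) (hL : 1 ≤ L)
    (hmeas : ∀ N : ℕ, L < N → ∀ n : Fin N, Measurable (W N n))
    (hindep : ∀ N : ℕ, L < N → iIndepFun (W N) (P N))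
    (hdist : ∀ N : ℕ, L < N → ∀ n : Fin N, (P N).map (W N n) = gammaMeasure a r)
    {θ : ℝ} (hθ₀ : 0 < θ) (hθ : θ < r⁻¹) :
    Tendsto (fun N : ℕ => P N {ω | (topSum L fun n => W N n ω) < L * (θ * log N)})
      atTop (𝓝 0) := by
  obtain ⟨β, hβ, hβθ⟩ := exists_between ((lt_inv_comm₀ hθ₀ hr).1 hθ)
  have hκ : 0 < 1 - β * θ := sub_pos.2 ((lt_mul_inv_iff₀ hθ₀).1 (by rwa [one_mul]))
  obtain ⟨c, hc, hc'⟩ := exists_le_gammaMeasure_Ici ha hr hβ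
  have := isProbabilityMeasure_gammaMeasure ha hr
  refine tendsto_zero_of_le_ofReal
    (tendsto_natCast_pow_mul_exp_neg_mul_rpow (L - 1) (half_pos hc) hκ) ?_
  filter_upwards [(tendsto_const_mul_log_natCast_atTop hθ₀).eventually hc',
    eventually_ge_atTop (2 * L), eventually_gt_atTop 0] with N hcN hN2L hN0
  set k := N + 1 - L
  have hN : (0 : ℝ) < N := by exact_mod_cast hN0
  have hexp : c / 2 * (N : ℝ) ^ (1 - β * θ) ≤ c * exp (-β * (θ * log N)) * k := by
    have hk : (N : ℝ) / 2 ≤ k := by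
      rw [div_le_iff₀ two_pos]
      exact_mod_cast (show N ≤ k * 2 by omega)
    calc c / 2 * (N : ℝ) ^ (1 - β * θ) = c * (N : ℝ) ^ (-(β * θ)) * (N / 2) := by
          rw [sub_eq_add_neg, rpow_add hN, rpow_one]
          ring
      _ ≤ c * exp (-β * (θ * log N)) * k := by
          rw [exp_neg_mul_mul_log hN]
          gcongr
  calc P N _ ≤ N ^ (L - 1) * gammaMeasure a r (Iio (θ * log N)) ^ k :=
        measure_topSum_lt_mul_le hL (by omega) (hmeas N (by omega)) (hindep N (by omega))
          (hdist N (by omega)) _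
    _ ≤ N ^ (L - 1) * ENNReal.ofReal (exp (-(c * exp (-β * (θ * log N)) * k))) := by
        rw [← compl_Ici]
        gcongr
        exact measure_compl_pow_le_exp_neg measurableSet_Ici (by positivity) hcN k
    _ = ENNReal.ofReal ((N : ℝ) ^ (L - 1) * exp (-(c * exp (-β * (θ * log N)) * k))) := by
        rw [ENNReal.ofReal_mul (by positivity), ← ENNReal.ofReal_natCast,
          ← ENNReal.ofReal_pow hN.le]
    _ ≤ ENNReal.ofReal ((N : ℝ) ^ (L - 1) * exp (-(c / 2 * (N : ℝ) ^ (1 - β * θ)))) := by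
        gcongr

end Concentration

theorem stmt4_general
    (m : ℝ) (hm : 1 / 2 ≤ m)
    (L : ℕ) (hL : 1 ≤ L)
    (Ω : ℕ → Type) [∀ N, MeasurableSpace (Ω N)]
    (P : ∀ N, Measure (Ω N))
    (W : ∀ N : ℕ, Fin N → Ω N → ℝ)
    (hmeas : ∀ N : ℕ, L < N → ∀ n : Fin N, Measurable (W N n))
    (hindep : ∀ N : ℕ, L < N →
      iIndepFun (W N) (P N))
    (hdist : ∀ N : ℕ, L < N → ∀ n : Fin N,
      (P N).map (W N n) = gammaMeasure m m) :
    ∀ ε : ℝ, 0 < ε →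
      Tendsto
        (fun N : ℕ =>
          (P N) {ω | ε ≤
            |topSum L (fun n => W N n ω) / (((L : ℝ) / m) * Real.log N) - 1|})
        atTop (nhds 0) := by
  intro ε hε
  have hm₀ : 0 < m := by linarith
  set δ := min (ε / 2) (1 / 2)
  have hδ : 0 < δ := lt_min (half_pos hε) one_half_pos
  have hupper := tendsto_measure_mul_le_topSum hm₀ hm₀ hL hmeas hindep hdist (θ := (1 + ε) / m)
    (by rw [inv_eq_one_div]; gcongr; linarith)
  have hlower := tendsto_measure_topSum_lt_mul hm₀ hm₀ hL hmeas hindep hdist (θ := (1 - δ) / m)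
    (div_pos (by linarith [min_le_right (ε / 2) (1 / 2)]) hm₀)
    (by rw [inv_eq_one_div]; gcongr; linarith)
  refine tendsto_of_tendsto_of_tendsto_of_le_of_le' tendsto_const_nhds
    (by simpa using hupper.add hlower) (Eventually.of_forall fun _ => bot_le) ?_
  filter_upwards [eventually_gt_atTop 1] with N hN
  refine (measure_mono fun ω hω => ?_).trans (measure_union_le _ _)
  have ha : 0 < (L : ℝ) / m * log N :=
    mul_pos (div_pos (by exact_mod_cast hL) hm₀) (log_pos (by exact_mod_cast hN))
  rcases le_or_le_of_le_abs_div_sub_one ha hω with h | h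
  · exact Or.inl (le_of_eq_of_le (by ring) h)
  · refine Or.inr (h.trans_lt ?_)
    rw [show (L : ℝ) * ((1 - δ) / m * log N) = (1 - δ) * (L / m * log N) by ring]
    exact mul_lt_mul_of_pos_right (by linarith [min_le_left (ε / 2) (1 / 2)]) ha

theorem stmt4
    (m : ℝ) (hm : 1 / 2 ≤ m)
    (L : ℕ) (hL : 1 ≤ L)
    (Ω : ℕ → Type) [∀ N, MeasurableSpace (Ω N)]
    (P : ∀ N, Measure (Ω N)) [∀ N, IsProbabilityMeasure (P N)]
    (W : ∀ N : ℕ, Fin N → Ω N → ℝ)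
    (hmeas : ∀ N : ℕ, L < N → ∀ n : Fin N, Measurable (W N n))
    (hindep : ∀ N : ℕ, L < N →
      iIndepFun (W N) (P N))
    (hdist : ∀ N : ℕ, L < N → ∀ n : Fin N,
      (P N).map (W N n) = gammaMeasure m m) :
    ∀ ε : ℝ, 0 < ε →
      Tendsto
        (fun N : ℕ =>
          (P N) {ω | ε ≤
            |topSum L (fun n => W N n ω) / (((L : ℝ) / m) * Real.log N) - 1|})
        atTop (nhds 0) :=
  stmt4_general m hm L hL Ω P W hmeas hindep hdist
end

section
/- Let m > 0 and let L ≥ 1 be a fixed integer. For N > L, let υ_N > 0 be the unique solution of G(m, m υ_N) = (L/N) · Γ(m), where G(s, x) := ∫_x^∞ t^{s−1} e^{−t} dt and Γ(m) = G(m, 0). Then m υ_N / log N → 1 as N → ∞. -/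
/-!
`G(m, x) = ∫ₓ^∞ t^(m-1) e^(-t) dt` decays like `e^(-x)` up to subexponential factors. For
`0 < δ ≤ 1`, `G(m, x) ≤ Γ(m) δ^(-m) e^(-(1-δ)x)` because `e^(-t) ≤ e^(-(1-δ)x) e^(-δt)` for
`t ≥ x`, and `G(m, x) ≥ e^(-(1+δ)x) / (1+δ)` for large `x` because `t^(m-1) ≥ e^(-δt)`
eventually. Hence `log G(m, x) / x → -1`. The defining equation forces `x_N = m υ_N → ∞` and
gives `log N = log (L Γ(m)) - log G(m, x_N)`, so `log N / x_N → 1`.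
-/

open Filter

/-- The (real) upper incomplete gamma function `G(s, x) = ∫ₓ^∞ t^(s-1) e^(-t) dt`. -/
noncomputable def upperGamma (s x : ℝ) : ℝ :=
  ∫ t in Set.Ioi x, t ^ (s - 1) * Real.exp (-t)

open MeasureTheory Set Real Topology

lemma eventually_exp_neg_mul_le_rpow (s : ℝ) {δ : ℝ} (hδ : 0 < δ) :
    ∀ᶠ t in atTop, exp (-(δ * t)) ≤ t ^ s := by
  filter_upwards [(isLittleO_rpow_exp_pos_mul_atTop (-s) hδ).bound one_pos,
    eventually_gt_atTop 0] with t h ht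
  rw [one_mul, norm_of_nonneg (by positivity), norm_of_nonneg (exp_pos _).le,
    rpow_neg ht.le] at h
  rw [exp_neg]
  exact inv_le_of_inv_le₀ (by positivity) h

lemma ae_restrict_Ioi_rpow_mul_exp_nonneg (s : ℝ) {a : ℝ} (ha : 0 ≤ a) (g : ℝ → ℝ) :
    0 ≤ᵐ[volume.restrict (Ioi a)] fun t => t ^ s * exp (g t) := by
  filter_upwards [ae_restrict_mem measurableSet_Ioi] with t ht
  have : 0 < t := ha.trans_lt ht
  positivity

section UpperGamma

variable {m : ℝ}

lemma integrableOn_upperGamma_integrand (hm : 0 < m) {a : ℝ} (ha : 0 ≤ a) :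
    IntegrableOn (fun t : ℝ => t ^ (m - 1) * exp (-t)) (Ioi a) :=
  ((GammaIntegral_convergent hm).congr_fun (fun _ _ => mul_comm _ _) measurableSet_Ioi).mono_set
    (Ioi_subset_Ioi ha)

lemma antitoneOn_upperGamma (hm : 0 < m) : AntitoneOn (upperGamma m) (Ici 0) :=
  fun _ ha _ _ hab => setIntegral_mono_set (integrableOn_upperGamma_integrand hm ha)
    (ae_restrict_Ioi_rpow_mul_exp_nonneg _ ha _) (Eventually.of_forall (Ioi_subset_Ioi hab))

lemma upperGamma_le (hm : 0 < m) {δ a : ℝ} (hδ : 0 < δ) (hδ₁ : δ ≤ 1) (ha : 0 ≤ a) :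
    upperGamma m a ≤ Gamma m / δ ^ m * exp (-(1 - δ) * a) := by
  have hint : IntegrableOn (fun t : ℝ => t ^ (m - 1) * exp (-(δ * t))) (Ioi 0) := by
    simpa only [rpow_one, neg_mul] using
      integrableOn_rpow_mul_exp_neg_mul_rpow (by linarith : -1 < m - 1) one_pos hδ
  calc upperGamma m a
      ≤ ∫ t in Ioi a, exp (-(1 - δ) * a) * (t ^ (m - 1) * exp (-(δ * t))) := by
        refine setIntegral_mono_on (integrableOn_upperGamma_integrand hm ha)
          ((hint.mono_set (Ioi_subset_Ioi ha)).const_mul _) measurableSet_Ioi fun t ht => ?_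
        have ht0 : 0 < t := ha.trans_lt ht
        rw [mul_left_comm, ← exp_add]
        gcongr
        nlinarith [mem_Ioi.1 ht]
    _ = exp (-(1 - δ) * a) * ∫ t in Ioi a, t ^ (m - 1) * exp (-(δ * t)) :=
        integral_const_mul _ _
    _ ≤ exp (-(1 - δ) * a) * ∫ t in Ioi 0, t ^ (m - 1) * exp (-(δ * t)) := by
        refine mul_le_mul_of_nonneg_left ?_ (exp_pos _).le
        exact setIntegral_mono_set hint (ae_restrict_Ioi_rpow_mul_exp_nonneg _ le_rfl _)
          (Eventually.of_forall (Ioi_subset_Ioi ha))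
    _ = Gamma m / δ ^ m * exp (-(1 - δ) * a) := by
        rw [integral_rpow_mul_exp_neg_mul_Ioi hm hδ, div_rpow zero_le_one hδ.le, one_rpow]
        ring

lemma eventually_exp_div_le_upperGamma (hm : 0 < m) {δ : ℝ} (hδ : 0 < δ) :
    ∀ᶠ a in atTop, exp (-(1 + δ) * a) / (1 + δ) ≤ upperGamma m a := by
  obtain ⟨A, hA⟩ := eventually_atTop.1 (eventually_exp_neg_mul_le_rpow (m - 1) hδ)
  filter_upwards [eventually_ge_atTop A, eventually_ge_atTop 0] with a hAa ha
  have hneg : -(1 + δ) < 0 := by linarith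
  calc exp (-(1 + δ) * a) / (1 + δ) = ∫ t in Ioi a, exp (-(1 + δ) * t) := by
        rw [integral_exp_mul_Ioi hneg, neg_div_neg_eq]
    _ ≤ upperGamma m a := by
        refine setIntegral_mono_on (integrableOn_exp_mul_Ioi hneg a)
          (integrableOn_upperGamma_integrand hm ha) measurableSet_Ioi fun t ht => ?_
        rw [show -(1 + δ) * t = -(δ * t) + -t by ring, exp_add]
        gcongr
        exact hA t (hAa.trans ht.le)

lemma upperGamma_pos (hm : 0 < m) {a : ℝ} (ha : 0 ≤ a) : 0 < upperGamma m a := by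
  obtain ⟨b, hb, hab⟩ :=
    ((eventually_exp_div_le_upperGamma hm one_pos).and (eventually_ge_atTop a)).exists
  calc 0 < exp (-(1 + 1) * b) / (1 + 1) := by positivity
    _ ≤ upperGamma m b := hb
    _ ≤ upperGamma m a := antitoneOn_upperGamma hm ha (ha.trans hab) hab

lemma tendsto_log_upperGamma_div (hm : 0 < m) :
    Tendsto (fun a => log (upperGamma m a) / a) atTop (𝓝 (-1)) := by
  refine Metric.tendsto_nhds.2 fun ε hε => ?_
  set δ := min (ε / 2) 1
  have hδ : 0 < δ := by positivity
  have hδ₁ : δ ≤ 1 := min_le_right _ _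
  set C := Gamma m / δ ^ m
  filter_upwards [eventually_exp_div_le_upperGamma hm hδ, eventually_gt_atTop 0,
    eventually_gt_atTop (|log (1 + δ)| / δ), eventually_gt_atTop (|log C| / δ)]
    with a hlow ha h₁ h₂
  rw [div_lt_iff₀ hδ] at h₁ h₂
  have hG := upperGamma_pos hm ha.le
  have hδε : 2 * δ * a ≤ ε * a := by
    gcongr
    linarith [min_le_left (ε / 2) 1]
  have hlow' : -(1 + δ) * a - log (1 + δ) ≤ log (upperGamma m a) := by
    simpa only [log_div (exp_pos _).ne' (by positivity : (1 + δ) ≠ 0), log_exp] using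
      log_le_log (by positivity) hlow
  have hup : log (upperGamma m a) ≤ log C - (1 - δ) * a := by
    have := log_le_log hG (upperGamma_le hm hδ hδ₁ ha.le)
    rw [log_mul (by positivity) (exp_pos _).ne', log_exp] at this
    linarith
  rw [dist_eq, sub_neg_eq_add, div_add_one ha.ne', abs_div, abs_of_pos ha, div_lt_iff₀ ha,
    abs_lt]
  constructor <;> linarith [le_abs_self (log (1 + δ)), le_abs_self (log C)]

lemma tendsto_atTop_of_tendsto_upperGamma_nhds_zero (hm : 0 < m) {α : Type*} {l : Filter α}
    {u : α → ℝ} (hu : ∀ᶠ i in l, 0 ≤ u i) (h : Tendsto (fun i => upperGamma m (u i)) l (𝓝 0)) :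
    Tendsto u l atTop := by
  refine tendsto_atTop.2 fun b => ?_
  have hb : 0 ≤ max b 0 := le_max_right _ _
  filter_upwards [h.eventually (gt_mem_nhds (upperGamma_pos hm hb)), hu] with i hi hi0
  by_contra! hlt
  exact (antitoneOn_upperGamma hm hi0 hb (hlt.le.trans (le_max_left _ _))).not_gt hi

end UpperGamma

theorem stmt13 (m : ℝ) (hm : 0 < m) (L : ℕ) (hL : 1 ≤ L)
    (υ : ℕ → ℝ)
    (hυ : ∀ N : ℕ, L < N →
      0 < υ N ∧ upperGamma m (m * υ N) = ((L : ℝ) / N) * upperGamma m 0) :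
    Tendsto (fun N : ℕ => m * υ N / Real.log N) atTop (nhds 1) := by
  set K := (L : ℝ) * upperGamma m 0
  have hK : 0 < K := mul_pos (by exact_mod_cast hL) (upperGamma_pos hm le_rfl)
  have hG : ∀ᶠ N : ℕ in atTop, upperGamma m (m * υ N) = K / N :=
    (eventually_gt_atTop L).mono fun N hN => by rw [(hυ N hN).2]; ring
  have hx : Tendsto (fun N : ℕ => m * υ N) atTop atTop := by
    refine tendsto_atTop_of_tendsto_upperGamma_nhds_zero hm
      ((eventually_gt_atTop L).mono fun N hN => (mul_pos hm (hυ N hN).1).le) ?_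
    exact (tendsto_const_nhds.div_atTop tendsto_natCast_atTop_atTop).congr'
      (hG.mono fun _ h => h.symm)
  have hlim : Tendsto (fun N : ℕ => (log K / (m * υ N) -
      log (upperGamma m (m * υ N)) / (m * υ N))⁻¹) atTop (𝓝 1) := by
    simpa using ((tendsto_const_nhds.div_atTop hx).sub
      ((tendsto_log_upperGamma_div hm).comp hx)).inv₀ (by norm_num)
  refine hlim.congr' ?_
  filter_upwards [hG, eventually_gt_atTop L] with N hGN hN
  have hN0 : (N : ℝ) ≠ 0 := Nat.cast_ne_zero.2 (by omega)
  rw [hGN, log_div hK.ne' hN0, ← sub_div, sub_sub_cancel, inv_div]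
end

section
/- Let m > 0 and let L ≥ 1 be a fixed integer. For N > L, let υ_N > 0 be the unique solution of G(m, m υ_N) = (L/N) · Γ(m), and define μ_N := N · G(m+1, m υ_N)/(m Γ(m)), where G(s, x) := ∫_x^∞ t^{s−1} e^{−t} dt and Γ(m) = G(m, 0). Then μ_N/(L υ_N) → 1 as N → ∞; consequently μ_N → ∞ as N → ∞. -/
/-!
Since `G(m, m υ_N) = (L/N) Γ(m) → 0` while `G(m, ·)` is positive and decreasing on `[0, ∞)`,
the thresholds `υ_N` tend to infinity. Integrating by parts, `G(m+1, x) = m G(m, x) + x^m e^{-x}`,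
and combined with the defining relation of `υ_N` this gives the exact identity
`μ_N / (L υ_N) = 1/υ_N + x^(m-1) e^(-x) / G(m, x)` at `x = m υ_N`.
By l'Hôpital's rule `G(m, x) ~ x^(m-1) e^(-x)` as `x → ∞`, so the right-hand side tends to `1`.
-/

open Filter MeasureTheory Set Topology

section UpperGamma

variable {s : ℝ}

lemma integrableOn_rpow_mul_exp_neg_Ioi (hs : 0 < s) {x : ℝ} (hx : 0 ≤ x) :
    IntegrableOn (fun t : ℝ => t ^ (s - 1) * Real.exp (-t)) (Ioi x) := by
  simpa [mul_comm] using (Real.GammaIntegral_convergent hs).mono_set (Ioi_subset_Ioi hx)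

lemma upperGamma_eq_integral_Ioc_add (hs : 0 < s) {a b : ℝ} (ha : 0 ≤ a) (hab : a ≤ b) :
    upperGamma s a = (∫ t in Ioc a b, t ^ (s - 1) * Real.exp (-t)) + upperGamma s b := by
  rw [upperGamma, upperGamma, ← Ioc_union_Ioi_eq_Ioi hab]
  exact setIntegral_union (Ioc_disjoint_Ioi le_rfl) measurableSet_Ioi
    ((integrableOn_rpow_mul_exp_neg_Ioi hs ha).mono_set Ioc_subset_Ioi_self)
    (integrableOn_rpow_mul_exp_neg_Ioi hs (ha.trans hab))

lemma upperGamma_eq_sub_intervalIntegral (hs : 0 < s) {x : ℝ} (hx : 0 ≤ x) :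
    upperGamma s x = upperGamma s 0 - ∫ t in 0..x, t ^ (s - 1) * Real.exp (-t) := by
  rw [intervalIntegral.integral_of_le hx, upperGamma_eq_integral_Ioc_add hs le_rfl hx]
  ring

lemma upperGamma_antitoneOn (hs : 0 < s) : AntitoneOn (upperGamma s) (Ici 0) := by
  intro a ha b _ hab
  rw [upperGamma_eq_integral_Ioc_add hs ha hab, le_add_iff_nonneg_left]
  refine setIntegral_nonneg measurableSet_Ioc fun t ht => ?_
  exact mul_nonneg (Real.rpow_nonneg ((mem_Ici.1 ha).trans ht.1.le) _) (Real.exp_pos _).le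

lemma upperGamma_pos_s14 (hs : 0 < s) {x : ℝ} (hx : 0 ≤ x) : 0 < upperGamma s x := by
  have hsupp : (Function.support fun t : ℝ => t ^ (s - 1) * Real.exp (-t)) ∩ Ioi x = Ioi x :=
    inter_eq_right.2 fun t ht =>
      mul_ne_zero (Real.rpow_pos_of_pos (hx.trans_lt ht) _).ne' (Real.exp_pos _).ne'
  rw [upperGamma, setIntegral_pos_iff_support_of_nonneg_ae _
    (integrableOn_rpow_mul_exp_neg_Ioi hs hx), hsupp, Real.volume_Ioi]
  · exact ENNReal.zero_lt_top
  · filter_upwards [self_mem_ae_restrict measurableSet_Ioi] with t ht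
    exact mul_nonneg (Real.rpow_nonneg (hx.trans (le_of_lt ht)) _) (Real.exp_pos _).le

lemma hasDerivAt_upperGamma (hs : 0 < s) {x : ℝ} (hx : 0 < x) :
    HasDerivAt (upperGamma s) (-(x ^ (s - 1) * Real.exp (-x))) x := by
  have hint : IntervalIntegrable (fun t : ℝ => t ^ (s - 1) * Real.exp (-t)) volume 0 x :=
    (intervalIntegrable_iff_integrableOn_Ioc_of_le hx.le).2
      ((integrableOn_rpow_mul_exp_neg_Ioi hs le_rfl).mono_set Ioc_subset_Ioi_self)
  have hderiv := (intervalIntegral.integral_hasDerivAt_right hint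
    ((by fun_prop : Measurable fun t : ℝ => t ^ (s - 1) * Real.exp (-t)).stronglyMeasurable.stronglyMeasurableAtFilter)
    ((Real.continuousAt_rpow_const x (s - 1) (Or.inl hx.ne')).mul
      (by fun_prop))).const_sub (upperGamma s 0)
  refine hderiv.congr_of_eventuallyEq ?_
  filter_upwards [Ioi_mem_nhds hx] with y hy
  exact upperGamma_eq_sub_intervalIntegral hs (le_of_lt hy)

lemma tendsto_upperGamma_atTop (hs : 0 < s) : Tendsto (upperGamma s) atTop (𝓝 0) := by
  have h := (intervalIntegral_tendsto_integral_Ioi 0 (integrableOn_rpow_mul_exp_neg_Ioi hs le_rfl)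
    tendsto_id).const_sub (upperGamma s 0)
  rw [← upperGamma, sub_self] at h
  refine h.congr' ?_
  filter_upwards [eventually_ge_atTop 0] with x hx
  exact (upperGamma_eq_sub_intervalIntegral hs hx).symm

lemma tendsto_rpow_mul_exp_neg_div_upperGamma (hs : 0 < s) :
    Tendsto (fun x => x ^ (s - 1) * Real.exp (-x) / upperGamma s x) atTop (𝓝 1) := by
  refine HasDerivAt.lhopital_zero_atTop
    (f' := fun x => (s - 1) * x ^ (s - 1 - 1) * Real.exp (-x) + x ^ (s - 1) * (Real.exp (-x) * -1))
    (g' := fun x => -(x ^ (s - 1) * Real.exp (-x))) ?_ ?_ ?_ ?_ (tendsto_upperGamma_atTop hs) ?_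
  · filter_upwards [eventually_gt_atTop 0] with x hx
    exact (Real.hasDerivAt_rpow_const (Or.inl hx.ne')).mul (hasDerivAt_neg x).exp
  · filter_upwards [eventually_gt_atTop 0] with x hx using hasDerivAt_upperGamma hs hx
  · filter_upwards [eventually_gt_atTop 0] with x hx
    exact neg_ne_zero.2 (mul_ne_zero (Real.rpow_pos_of_pos hx _).ne' (Real.exp_pos _).ne')
  · simpa using tendsto_rpow_mul_exp_neg_mul_atTop_nhds_zero (s - 1) 1 one_pos
  · have h : Tendsto (fun x : ℝ => 1 - (s - 1) / x) atTop (𝓝 1) := by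
      simpa using tendsto_const_nhds.sub
        (tendsto_const_nhds.div_atTop (tendsto_id (x := (atTop : Filter ℝ))))
    refine h.congr' ?_
    filter_upwards [eventually_gt_atTop 0] with x hx
    have hpow := (Real.rpow_pos_of_pos hx (s - 1)).ne'
    rw [Real.rpow_sub_one hx.ne' (s - 1)]
    field_simp
    ring

lemma upperGamma_add_one (hs : 0 < s) {x : ℝ} (hx : 0 < x) :
    upperGamma (s + 1) x = s * upperGamma s x + x ^ s * Real.exp (-x) := by
  have hint₁ := integrableOn_rpow_mul_exp_neg_Ioi (by linarith : 0 < s + 1) hx.le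
  have hint₂ := (integrableOn_rpow_mul_exp_neg_Ioi hs hx.le).const_mul s
  have hparts : (∫ t in Ioi x,
      (t ^ (s + 1 - 1) * Real.exp (-t) - s * (t ^ (s - 1) * Real.exp (-t))))
      = 0 - (-(x ^ s * Real.exp (-x))) := by
    refine integral_Ioi_of_hasDerivAt_of_tendsto' (f := fun t => -(t ^ s * Real.exp (-t)))
      (fun t ht => ?_) (hint₁.sub hint₂) ?_
    · convert ((Real.hasDerivAt_rpow_const (p := s) (Or.inl (hx.trans_le ht).ne')).mul
        (hasDerivAt_neg t).exp).neg using 1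
      · rfl
      rw [add_sub_cancel_right]
      ring
    · simpa using (tendsto_rpow_mul_exp_neg_mul_atTop_nhds_zero s 1 one_pos).neg
  rw [integral_sub hint₁ hint₂, integral_const_mul] at hparts
  change upperGamma (s + 1) x - s * upperGamma s x = _ at hparts
  linarith

lemma upperGamma_add_one_div (hs : 0 < s) {x : ℝ} (hx : 0 < x) :
    upperGamma (s + 1) x / (s * upperGamma s x)
      = 1 + x / s * (x ^ (s - 1) * Real.exp (-x) / upperGamma s x) := by
  have hG := (upperGamma_pos_s14 hs hx.le).ne'
  rw [upperGamma_add_one hs hx, Real.rpow_sub_one hx.ne']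
  field_simp

lemma tendsto_atTop_of_tendsto_upperGamma_zero {α : Type*} {l : Filter α} {f : α → ℝ}
    (hs : 0 < s) (hf : ∀ᶠ a in l, 0 ≤ f a)
    (hG : Tendsto (fun a => upperGamma s (f a)) l (𝓝 0)) : Tendsto f l atTop := by
  refine tendsto_atTop.2 fun b => ?_
  have hb : 0 ≤ max b 0 := le_max_right b 0
  filter_upwards [hf, hG.eventually_lt_const (upperGamma_pos_s14 hs hb)] with a ha hlt
  by_contra! hab
  exact (upperGamma_antitoneOn hs ha hb (hab.le.trans (le_max_left b 0))).not_gt hlt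

end UpperGamma

lemma mean_div_eq_inv_add {m υ N L : ℝ} (hm : 0 < m) (hυ : 0 < υ) (hN : N ≠ 0)
    (hυeq : upperGamma m (m * υ) = L / N * upperGamma m 0) :
    N * upperGamma (m + 1) (m * υ) / (m * upperGamma m 0) / (L * υ)
      = υ⁻¹ + (m * υ) ^ (m - 1) * Real.exp (-(m * υ)) / upperGamma m (m * υ) := by
  have hGx := (upperGamma_pos_s14 hm (by positivity : 0 ≤ m * υ)).ne'
  have hΓ := (upperGamma_pos_s14 hm le_rfl).ne'
  have hL : L ≠ 0 := by
    rintro rfl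
    simp [hGx] at hυeq
  have hmean : N * upperGamma (m + 1) (m * υ) / (m * upperGamma m 0)
      = L * (upperGamma (m + 1) (m * υ) / (m * upperGamma m (m * υ))) := by
    rw [hυeq]
    field_simp
  rw [hmean, upperGamma_add_one_div hm (by positivity), mul_div_cancel_left₀ _ hm.ne']
  field_simp

theorem stmt14 (m : ℝ) (hm : 0 < m) (L : ℕ) (hL : 1 ≤ L)
    (υ μ : ℕ → ℝ)
    (hυ : ∀ N : ℕ, L < N →
      0 < υ N ∧ upperGamma m (m * υ N) = ((L : ℝ) / N) * upperGamma m 0)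
    (hμ : ∀ N : ℕ, L < N →
      μ N = N * upperGamma (m + 1) (m * υ N) / (m * upperGamma m 0)) :
    Tendsto (fun N : ℕ => μ N / ((L : ℝ) * υ N)) atTop (nhds 1) ∧
      Tendsto μ atTop atTop := by
  have hL0 : (0 : ℝ) < L := by exact_mod_cast hL
  have hυpos : ∀ᶠ N in atTop, 0 < υ N :=
    (eventually_gt_atTop L).mono fun N hN => (hυ N hN).1
  have hG : Tendsto (fun N => upperGamma m (m * υ N)) atTop (𝓝 0) := by
    refine Tendsto.congr' ?_ (by
      simpa using (tendsto_const_div_atTop_nhds_zero_nat (L : ℝ)).mul_const (upperGamma m 0))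
    filter_upwards [eventually_gt_atTop L] with N hN using (hυ N hN).2.symm
  have hx : Tendsto (fun N => m * υ N) atTop atTop :=
    tendsto_atTop_of_tendsto_upperGamma_zero hm (hυpos.mono fun N h => by positivity) hG
  have hυtop : Tendsto υ atTop atTop := by
    simpa [mul_div_cancel_left₀ _ hm.ne'] using hx.atTop_div_const hm
  have hratio : ∀ᶠ N in atTop, (υ N)⁻¹ + (m * υ N) ^ (m - 1) * Real.exp (-(m * υ N))
      / upperGamma m (m * υ N) = μ N / (L * υ N) := by
    filter_upwards [eventually_gt_atTop L] with N hN
    rw [hμ N hN]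
    exact (mean_div_eq_inv_add hm (hυ N hN).1 (Nat.cast_ne_zero.2 (by omega)) (hυ N hN).2).symm
  have hlim : Tendsto (fun N => μ N / (L * υ N)) atTop (𝓝 1) := by
    simpa using (hυtop.inv_tendsto_atTop.add
      ((tendsto_rpow_mul_exp_neg_div_upperGamma hm).comp hx)).congr' hratio
  refine ⟨hlim, (hlim.pos_mul_atTop one_pos (hυtop.const_mul_atTop hL0)).congr' ?_⟩
  filter_upwards [hυpos] with N hN
  field_simp
end

section
/- Let c > 0. For each N, let γ_N be the Gaussian probability measure on ℝ with mean μ_N and variance σ_N² ≥ 0. If μ_N → ∞ and σ_N²/μ_N² → 0 as N → ∞, then (∫ log₂(1 + c|x|) dγ_N(x)) / log₂(1 + c μ_N) → 1 as N → ∞. -/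
open MeasureTheory ProbabilityTheory Filter

open Real Topology

/-!
Only the mean `m` and variance `v` of the Gaussian matter. The tangent line of the concave map
`t ↦ log (1 + c t)` at `m`, combined with `|x| ≤ x + (x - m)² / (2m)`, bounds `log (1 + c|x|)`
above by a quadratic polynomial in `x`, so `E log (1 + c|X|) ≤ log (1 + cm) + v / (2m²)`.
Chebyshev's idea in pointwise form, `log (1 + cm/2) (1 - (x - m)² / (m/2)²) ≤ log (1 + c|x|)`,
gives `E log (1 + c|X|) ≥ (1 - 4v/m²) log (1 + cm/2) ≥ (1 - 4v/m²) (log (1 + cm) - log 2)`.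
Divided by `log (1 + cm) → ∞`, both bounds tend to `1`.
-/

section Pointwise

variable {c m : ℝ}

lemma log_one_add_mul_le_tangent (hc : 0 ≤ c) (hm : 0 ≤ m) {t : ℝ} (ht : 0 ≤ t) :
    log (1 + c * t) ≤ log (1 + c * m) + c / (1 + c * m) * (t - m) := by
  have hm' : 0 < 1 + c * m := by positivity
  have key := log_le_sub_one_of_pos (div_pos (by positivity : 0 < 1 + c * t) hm')
  rw [log_div (by positivity) hm'.ne'] at key
  have : (1 + c * t) / (1 + c * m) - 1 = c / (1 + c * m) * (t - m) := by
    field_simp; ring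
  linarith

lemma abs_le_add_sq_sub_div (hm : 0 < m) (x : ℝ) : |x| ≤ x + (x - m) ^ 2 / (2 * m) := by
  have hneg : x + (x - m) ^ 2 / (2 * m) = -x + (x + m) ^ 2 / (2 * m) := by
    field_simp; ring
  refine abs_le'.2 ⟨?_, ?_⟩
  · exact le_add_of_nonneg_right (by positivity)
  · exact hneg ▸ le_add_of_nonneg_right (by positivity)

lemma log_one_add_mul_half_mul_le_log_one_add_mul_abs (hc : 0 ≤ c) (hm : 0 < m) (x : ℝ) :
    log (1 + c * (m / 2)) * (1 - (x - m) ^ 2 / (m / 2) ^ 2) ≤ log (1 + c * |x|) := by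
  have hlog : 0 ≤ log (1 + c * (m / 2)) := log_nonneg (by nlinarith)
  rcases le_or_gt (m / 2) |x - m| with hfar | hnear
  · have : 1 - (x - m) ^ 2 / (m / 2) ^ 2 ≤ 0 := by
      rw [sub_nonpos, one_le_div (by positivity), ← sq_abs (x - m)]
      exact pow_le_pow_left₀ (by positivity) hfar 2
    calc _ ≤ 0 := mul_nonpos_of_nonneg_of_nonpos hlog this
      _ ≤ _ := log_nonneg (by nlinarith [abs_nonneg x])
  · have hx : m / 2 ≤ |x| := by
      have := neg_abs_le (x - m); have := le_abs_self x; linarith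
    calc _ ≤ log (1 + c * (m / 2)) := mul_le_of_le_one_right hlog (by
            have : 0 ≤ (x - m) ^ 2 / (m / 2) ^ 2 := by positivity
            linarith)
      _ ≤ _ := log_le_log (by positivity) (by nlinarith)

lemma log_one_add_mul_le_log_two_add (hc : 0 ≤ c) (hm : 0 ≤ m) :
    log (1 + c * m) ≤ log 2 + log (1 + c * (m / 2)) := by
  rw [← log_mul two_ne_zero (by positivity)]
  exact log_le_log (by positivity) (by linarith)

end Pointwise

section Moments

variable {ν : Measure ℝ} {c m : ℝ}

lemma integrable_log_one_add_mul_abs (hc : 0 ≤ c) (hν : Integrable (fun x => x) ν) :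
    Integrable (fun x => log (1 + c * |x|)) ν := by
  refine (hν.abs.const_mul c).mono'
    (by fun_prop : Measurable fun x => log (1 + c * |x|)).aestronglyMeasurable
    (.of_forall fun x => ?_)
  have h := log_le_sub_one_of_pos (by positivity : 0 < 1 + c * |x|)
  rw [norm_of_nonneg (log_nonneg (by nlinarith [abs_nonneg x]))]
  simpa using h

lemma integral_sq_sub_mean (hmean : ∫ x, x ∂ν = m) :
    ∫ x, (x - m) ^ 2 ∂ν = Var[id; ν] := by
  simp [variance_eq_integral measurable_id.aemeasurable, hmean]

variable [IsProbabilityMeasure ν]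

lemma integral_abs_le_mean_add_variance_div (hν : MemLp id 2 ν) (hmean : ∫ x, x ∂ν = m)
    (hm : 0 < m) : ∫ x, |x| ∂ν ≤ m + Var[id; ν] / (2 * m) := by
  have hsq : Integrable (fun x => (x - m) ^ 2) ν := (hν.sub (memLp_const m)).integrable_sq
  have hid : Integrable (fun x => x) ν := hν.integrable one_le_two
  calc ∫ x, |x| ∂ν ≤ ∫ x, x + (x - m) ^ 2 / (2 * m) ∂ν :=
        integral_mono hid.abs (hid.add (hsq.div_const _)) (abs_le_add_sq_sub_div hm)
    _ = m + Var[id; ν] / (2 * m) := by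
        rw [integral_add hid (hsq.div_const _), integral_div, integral_sq_sub_mean hmean, hmean]

lemma integral_log_one_add_mul_abs_le (hν : MemLp id 2 ν) (hmean : ∫ x, x ∂ν = m)
    (hc : 0 ≤ c) (hm : 0 < m) :
    ∫ x, log (1 + c * |x|) ∂ν ≤ log (1 + c * m) + Var[id; ν] / (2 * m ^ 2) := by
  have hid : Integrable (fun x => x) ν := hν.integrable one_le_two
  have hslope : c / (1 + c * m) ≤ 1 / m := by
    rw [div_le_div_iff₀ (by positivity) hm]; linarith
  have htangent : Integrable (fun x => c / (1 + c * m) * (|x| - m)) ν :=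
    (hid.abs.sub (integrable_const m)).const_mul _
  calc ∫ x, log (1 + c * |x|) ∂ν
      ≤ ∫ x, log (1 + c * m) + c / (1 + c * m) * (|x| - m) ∂ν :=
        integral_mono (integrable_log_one_add_mul_abs hc hid)
          ((integrable_const _).add htangent)
          (fun x => log_one_add_mul_le_tangent hc hm.le (abs_nonneg x))
    _ = log (1 + c * m) + c / (1 + c * m) * (∫ x, |x| ∂ν - m) := by
        rw [integral_add (integrable_const _) htangent, integral_const_mul,
          integral_sub hid.abs (integrable_const m)]
        simp
    _ ≤ log (1 + c * m) + 1 / m * (Var[id; ν] / (2 * m)) := by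
        have hmoment := integral_abs_le_mean_add_variance_div hν hmean hm
        have hvar : 0 ≤ Var[id; ν] / (2 * m) := div_nonneg (variance_nonneg _ _) (by positivity)
        gcongr log (1 + c * m) + ?_
        calc c / (1 + c * m) * (∫ x, |x| ∂ν - m)
            ≤ c / (1 + c * m) * (Var[id; ν] / (2 * m)) := by gcongr; linarith
          _ ≤ 1 / m * (Var[id; ν] / (2 * m)) := by gcongr
    _ = log (1 + c * m) + Var[id; ν] / (2 * m ^ 2) := by
        field_simp

lemma integral_log_one_add_mul_abs_ge (hν : MemLp id 2 ν) (hmean : ∫ x, x ∂ν = m)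
    (hc : 0 ≤ c) (hm : 0 < m) :
    log (1 + c * (m / 2)) * (1 - Var[id; ν] / (m / 2) ^ 2) ≤ ∫ x, log (1 + c * |x|) ∂ν := by
  have hsq : Integrable (fun x => (x - m) ^ 2) ν := (hν.sub (memLp_const m)).integrable_sq
  calc log (1 + c * (m / 2)) * (1 - Var[id; ν] / (m / 2) ^ 2)
      = ∫ x, log (1 + c * (m / 2)) * (1 - (x - m) ^ 2 / (m / 2) ^ 2) ∂ν := by
        rw [integral_const_mul, integral_sub (integrable_const _) (hsq.div_const _),
          integral_div, integral_sq_sub_mean hmean]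
        simp
    _ ≤ ∫ x, log (1 + c * |x|) ∂ν :=
        integral_mono (((integrable_const _).sub (hsq.div_const _)).const_mul _)
          (integrable_log_one_add_mul_abs hc (hν.integrable one_le_two))
          (log_one_add_mul_half_mul_le_log_one_add_mul_abs hc hm)

end Moments

theorem tendsto_integral_log_one_add_mul_abs_div_log {ι : Type*} {l : Filter ι}
    {ν : ι → Measure ℝ} [∀ i, IsProbabilityMeasure (ν i)] {c : ℝ} {m : ι → ℝ} (hc : 0 < c)
    (hν : ∀ i, MemLp id 2 (ν i)) (hmean : ∀ i, ∫ x, x ∂ν i = m i) (hm : Tendsto m l atTop)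
    (hvar : Tendsto (fun i => Var[id; ν i] / m i ^ 2) l (𝓝 0)) :
    Tendsto (fun i => (∫ x, log (1 + c * |x|) ∂ν i) / log (1 + c * m i)) l (𝓝 1) := by
  set r := fun i => Var[id; ν i] / m i ^ 2
  have hL : Tendsto (fun i => log (1 + c * m i)) l atTop :=
    tendsto_log_atTop.comp (tendsto_atTop_add_const_left _ 1 (hm.const_mul_atTop hc))
  have hlower : Tendsto (fun i => (1 - 4 * r i) * (1 - log 2 / log (1 + c * m i))) l
      (𝓝 ((1 - 4 * 0) * (1 - 0))) :=
    (tendsto_const_nhds.sub (hvar.const_mul 4)).mul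
      (tendsto_const_nhds.sub (tendsto_const_nhds.div_atTop hL))
  have hupper : Tendsto (fun i => 1 + r i / 2 / log (1 + c * m i)) l (𝓝 (1 + 0)) :=
    tendsto_const_nhds.add ((hvar.div_const 2).div_atTop hL)
  norm_num at hlower hupper
  refine tendsto_of_tendsto_of_tendsto_of_le_of_le' hlower hupper ?_ ?_
  · filter_upwards [hm.eventually_gt_atTop 0, hL.eventually_gt_atTop 0,
      hvar.eventually_lt_const (by norm_num : (0 : ℝ) < 1 / 4)] with i hmi hLi hri
    have hbound := integral_log_one_add_mul_abs_ge (hν i) (hmean i) hc.le hmi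
    have hhalf := log_one_add_mul_le_log_two_add hc.le hmi.le
    rw [le_div_iff₀ hLi]
    calc (1 - 4 * r i) * (1 - log 2 / log (1 + c * m i)) * log (1 + c * m i)
        = (1 - 4 * r i) * (log (1 + c * m i) - log 2) := by field_simp
      _ ≤ (1 - 4 * r i) * log (1 + c * (m i / 2)) := by gcongr <;> linarith
      _ = log (1 + c * (m i / 2)) * (1 - Var[id; ν i] / (m i / 2) ^ 2) := by
        simp only [r]; field_simp; ring
      _ ≤ _ := hbound
  · filter_upwards [hm.eventually_gt_atTop 0, hL.eventually_gt_atTop 0] with i hmi hLi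
    have hbound := integral_log_one_add_mul_abs_le (hν i) (hmean i) hc.le hmi
    rw [div_le_iff₀ hLi]
    calc _ ≤ log (1 + c * m i) + Var[id; ν i] / (2 * m i ^ 2) := hbound
      _ = (1 + r i / 2 / log (1 + c * m i)) * log (1 + c * m i) := by
        simp only [r]; field_simp

theorem stmt17 (c : ℝ) (hc : 0 < c) (μ : ℕ → ℝ) (v : ℕ → NNReal)
    (hμ : Tendsto μ atTop atTop)
    (hv : Tendsto (fun N : ℕ => (v N : ℝ) / μ N ^ 2) atTop (nhds 0)) :
    Tendsto
      (fun N : ℕ =>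
        (∫ x, Real.logb 2 (1 + c * |x|) ∂(gaussianReal (μ N) (v N))) /
          Real.logb 2 (1 + c * μ N))
      atTop (nhds 1) := by
  have hlog := tendsto_integral_log_one_add_mul_abs_div_log
    (ν := fun N => gaussianReal (μ N) (v N)) hc (fun _ => memLp_id_gaussianReal 2)
    (fun _ => integral_id_gaussianReal) hμ (by simpa only [variance_id_gaussianReal] using hv)
  refine hlog.congr fun N => ?_
  simp only [logb, integral_div]
  rw [div_div_div_cancel_right₀ (log_pos one_lt_two).ne']
end

section
/- Let K ≥ 1 and L ≥ 1 be fixed integers, ρ > 0, and for each k ∈ {1, …, K} let β_k > 0 and m_k > 0. For each N and each k, suppose μ_{k,N} and σ_{k,N}² ≥ 0 satisfy μ_{k,N}/((L/m_k) log N) → 1 and σ_{k,N}²/μ_{k,N}² → 0 as N → ∞, and let γ_{k,N} be the Gaussian measure on ℝ with mean μ_{k,N} and variance σ_{k,N}². Then Σ_{k=1}^K ∫ log₂(1 + ρ β_k |x|) dγ_{k,N}(x), divided by Σ_{k=1}^K log₂(1 + ρ β_k (L/m_k) log N), converges to 1 as N → ∞. -/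
/-!
For `X ~ N(μ, v)` with `μ → ∞` and `v / μ² → 0`, the integral `E log (1 + b|X|)` is squeezed
between `(1 - 4 v / μ²) log (1 + b μ / 2)` (Chebyshev: at most `4 v / μ²` of the mass lies outside
`|x - μ| < μ / 2`) and `log (1 + b μ) + 1 + v / μ²` (pointwise, from
`1 + b|x| ≤ (1 + b μ)(1 + |x - μ| / μ)`). Both bounds are asymptotic to `log μ`, as is
`log (1 + b a)` for any `a ~ μ`, so every summand is asymptotic to its deterministic equivalent;
asymptotic equivalence of nonnegative functions survives finite sums.
-/

open MeasureTheory ProbabilityTheory Filter Asymptotics Real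
open scoped NNReal Topology

section Asymptotics

variable {α : Type*} {l : Filter α}

theorem isEquivalent_of_le_of_le {f g low up : α → ℝ} (hlow : low ~[l] g) (hup : up ~[l] g)
    (hg : ∀ᶠ x in l, 0 < g x) (h₁ : ∀ᶠ x in l, low x ≤ f x) (h₂ : ∀ᶠ x in l, f x ≤ up x) :
    f ~[l] g := by
  have hg' : ∀ᶠ x in l, g x ≠ 0 := hg.mono fun _ h => h.ne'
  rw [isEquivalent_iff_tendsto_one hg'] at hlow hup ⊢
  refine tendsto_of_tendsto_of_tendsto_of_le_of_le' hlow hup ?_ ?_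
  · filter_upwards [hg, h₁] with x hx h using div_le_div_of_nonneg_right h hx.le
  · filter_upwards [hg, h₂] with x hx h using div_le_div_of_nonneg_right h hx.le

theorem IsEquivalent.finsetSum_of_nonneg {ι : Type*} (s : Finset ι) {u v : ι → α → ℝ}
    (hv : ∀ i ∈ s, 0 ≤ v i) (h : ∀ i ∈ s, u i ~[l] v i) :
    (fun x => ∑ i ∈ s, u i x) ~[l] fun x => ∑ i ∈ s, v i x := by
  classical
  induction s using Finset.induction_on with
  | empty => simpa using IsEquivalent.refl
  | insert i s hi ih =>
    simp only [Finset.sum_insert hi]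
    exact (h i (s.mem_insert_self i)).add_add_of_nonneg (hv i (s.mem_insert_self i))
      (fun x => Finset.sum_nonneg fun j hj => hv j (Finset.mem_insert_of_mem hj) x)
      (ih (fun j hj => hv j (Finset.mem_insert_of_mem hj))
        (fun j hj => h j (Finset.mem_insert_of_mem hj)))

theorem isEquivalent_log_one_add_mul {f : α → ℝ} {c : ℝ} (hc : 0 < c)
    (hf : Tendsto f l atTop) : (fun x => log (1 + c * f x)) ~[l] fun x => log (f x) := by
  have hcf : Tendsto (fun x => c * f x) l atTop := hf.const_mul_atTop hc
  have h₁ : (fun x => log (1 + c * f x)) ~[l] fun x => log (c * f x) :=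
    (IsEquivalent.refl.const_add_of_norm_tendsto_atTop
      (tendsto_norm_atTop_atTop.comp hcf)).log hcf
  have h₂ : (fun x => log c + log (f x)) ~[l] fun x => log (f x) :=
    IsEquivalent.refl.const_add_of_norm_tendsto_atTop
      (tendsto_norm_atTop_atTop.comp (tendsto_log_atTop.comp hf))
  refine h₁.trans (h₂.congr_left ?_)
  filter_upwards [hf.eventually_gt_atTop 0] with x hx
  rw [log_mul hc.ne' hx.ne']

end Asymptotics

lemma log_one_add_mul_abs_le {b μ : ℝ} (hb : 0 ≤ b) (hμ : 0 < μ) (x : ℝ) :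
    log (1 + b * |x|) ≤ log (1 + b * μ) + (1 + (x - μ) ^ 2 / μ ^ 2) := by
  set t := |x - μ| / μ
  have ht : 0 ≤ t := by positivity
  have hx : |x| ≤ μ + |x - μ| := by
    have := abs_sub_abs_le_abs_sub x μ
    rw [abs_of_pos hμ] at this
    linarith
  have hprod : 1 + b * |x| ≤ (1 + b * μ) * (1 + t) := by
    have : μ * t = |x - μ| := mul_div_cancel₀ _ hμ.ne'
    nlinarith [mul_nonneg hb ht]
  have ht' : t ≤ 1 + (x - μ) ^ 2 / μ ^ 2 := by
    have : (x - μ) ^ 2 / μ ^ 2 = t ^ 2 := by rw [div_pow, sq_abs]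
    nlinarith [sq_nonneg (t - 1)]
  calc log (1 + b * |x|) ≤ log ((1 + b * μ) * (1 + t)) :=
        log_le_log (by positivity) hprod
    _ = log (1 + b * μ) + log (1 + t) := log_mul (by positivity) (by positivity)
    _ ≤ log (1 + b * μ) + (1 + (x - μ) ^ 2 / μ ^ 2) := by
        linarith [log_le_sub_one_of_pos (by linarith : 0 < 1 + t)]

section Gaussian

variable (μ : ℝ) (v : ℝ≥0)

lemma integrable_sq_sub_gaussianReal (c : ℝ) :
    Integrable (fun x => (x - c) ^ 2) (gaussianReal μ v) :=
  ((memLp_id_gaussianReal 2).sub (memLp_const c)).integrable_sq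

lemma integral_sq_sub_gaussianReal :
    ∫ x, (x - μ) ^ 2 ∂gaussianReal μ v = v := by
  have h := variance_eq_integral (X := fun x => x) (μ := gaussianReal μ v) aemeasurable_id
  rw [variance_fun_id_gaussianReal, integral_id_gaussianReal] at h
  exact h.symm

lemma gaussianReal_real_abs_sub_ge_le_div_sq {t : ℝ} (ht : 0 < t) :
    (gaussianReal μ v).real {x | t ≤ |x - μ|} ≤ v / t ^ 2 := by
  have h := meas_ge_le_variance_div_sq (μ := gaussianReal μ v) (X := fun x => x)
    (memLp_id_gaussianReal 2) ht
  rw [integral_id_gaussianReal, variance_fun_id_gaussianReal] at h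
  exact ENNReal.toReal_le_of_le_ofReal (by positivity) h

lemma integrable_log_one_add_mul_abs_gaussianReal {b : ℝ} (hb : 0 ≤ b) :
    Integrable (fun x => log (1 + b * |x|)) (gaussianReal μ v) := by
  refine Integrable.mono' (((memLp_id_gaussianReal 1).integrable le_rfl).abs.const_mul b)
    (by fun_prop : Measurable fun x : ℝ => log (1 + b * |x|)).aestronglyMeasurable
    (Eventually.of_forall fun x => ?_)
  dsimp only [id]
  have h₀ : 0 ≤ b * |x| := by positivity
  rw [norm_of_nonneg (log_nonneg (by linarith))]
  linarith [log_le_sub_one_of_pos (by linarith : 0 < 1 + b * |x|)]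

variable {μ v}

lemma integral_log_one_add_mul_abs_gaussianReal_le {b : ℝ} (hb : 0 ≤ b) (hμ : 0 < μ) :
    ∫ x, log (1 + b * |x|) ∂gaussianReal μ v ≤ log (1 + b * μ) + (1 + v / μ ^ 2) := by
  have hsq := (integrable_sq_sub_gaussianReal μ v μ).div_const (μ ^ 2)
  have hsq' : Integrable (fun x => 1 + (x - μ) ^ 2 / μ ^ 2) (gaussianReal μ v) :=
    (integrable_const _).add hsq
  have hint : Integrable (fun x => log (1 + b * μ) + (1 + (x - μ) ^ 2 / μ ^ 2))
      (gaussianReal μ v) :=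
    (integrable_const _).add hsq'
  refine (integral_mono (integrable_log_one_add_mul_abs_gaussianReal μ v hb) hint
    (log_one_add_mul_abs_le hb hμ)).trans_eq ?_
  rw [integral_add (integrable_const _) hsq',
    integral_add (integrable_const _) hsq, integral_div, integral_sq_sub_gaussianReal]
  simp

lemma le_integral_log_one_add_mul_abs_gaussianReal {b : ℝ} (hb : 0 ≤ b) (hμ : 0 < μ) :
    (1 - 4 * (v / μ ^ 2)) * log (1 + b / 2 * μ) ≤ ∫ x, log (1 + b * |x|) ∂gaussianReal μ v := by
  set c := log (1 + b / 2 * μ)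
  set B := {x : ℝ | μ / 2 ≤ |x - μ|}
  have hc : 0 ≤ c := log_nonneg (le_add_of_nonneg_right (by positivity))
  have hB : MeasurableSet B := measurableSet_le measurable_const (by fun_prop)
  have hBc : ∀ x ∈ Bᶜ, c ≤ log (1 + b * |x|) := fun x hx => by
    have hx : |x - μ| < μ / 2 := not_le.mp hx
    have : μ / 2 ≤ |x| := by
      have := abs_sub_abs_le_abs_sub μ x
      rw [abs_of_pos hμ, abs_sub_comm] at this
      linarith
    exact log_le_log (by positivity) (by nlinarith)
  have hmarkov : (gaussianReal μ v).real B ≤ 4 * (v / μ ^ 2) := by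
    refine (gaussianReal_real_abs_sub_ge_le_div_sq μ v (half_pos hμ)).trans_eq ?_
    field_simp
    ring
  calc (1 - 4 * (v / μ ^ 2)) * c ≤ (gaussianReal μ v).real Bᶜ * c := by
        rw [probReal_compl_eq_one_sub hB]
        gcongr
    _ = ∫ x, Bᶜ.indicator (fun _ => c) x ∂gaussianReal μ v := by
        rw [integral_indicator_const _ hB.compl, smul_eq_mul]
    _ ≤ ∫ x, log (1 + b * |x|) ∂gaussianReal μ v := by
        refine integral_mono ((integrable_const c).indicator hB.compl)
          (integrable_log_one_add_mul_abs_gaussianReal μ v hb) fun x => ?_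
        by_cases hx : x ∈ Bᶜ
        · rw [Set.indicator_of_mem hx]
          exact hBc x hx
        · rw [Set.indicator_of_notMem hx]
          exact log_nonneg (le_add_of_nonneg_right (by positivity))

end Gaussian

theorem isEquivalent_integral_log_one_add_mul_abs_gaussianReal {α : Type*} {l : Filter α}
    {b : ℝ} (hb : 0 < b) {μ : α → ℝ} {v : α → ℝ≥0} (hμ : Tendsto μ l atTop)
    (hv : Tendsto (fun n => (v n : ℝ) / μ n ^ 2) l (𝓝 0)) :
    (fun n => ∫ x, log (1 + b * |x|) ∂gaussianReal (μ n) (v n)) ~[l] fun n => log (μ n) := by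
  have hlog : Tendsto (fun n => log (μ n)) l atTop := tendsto_log_atTop.comp hμ
  have hlow : (fun n => (1 - 4 * ((v n : ℝ) / μ n ^ 2)) * log (1 + b / 2 * μ n)) ~[l]
      fun n => log (μ n) := by
    have hfactor : (fun n => 1 - 4 * ((v n : ℝ) / μ n ^ 2)) ~[l] fun _ => (1 : ℝ) :=
      (isEquivalent_const_iff_tendsto one_ne_zero).mpr
        (by simpa using (hv.const_mul 4).const_sub 1)
    exact (hfactor.mul (isEquivalent_log_one_add_mul (half_pos hb) hμ)).congr_right
      (Eventually.of_forall fun n => one_mul _)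
  have hup : (fun n => log (1 + b * μ n) + (1 + (v n : ℝ) / μ n ^ 2)) ~[l]
      fun n => log (μ n) :=
    (isEquivalent_log_one_add_mul hb hμ).add_isLittleO <|
      ((hv.const_add 1).isBigO_one ℝ).trans_isLittleO <|
        (isLittleO_one_left_iff ℝ).mpr (tendsto_norm_atTop_atTop.comp hlog)
  have hμ_pos := hμ.eventually_gt_atTop 0
  refine isEquivalent_of_le_of_le hlow hup (hlog.eventually_gt_atTop 0) ?_ ?_
  · filter_upwards [hμ_pos] with n hn using le_integral_log_one_add_mul_abs_gaussianReal hb.le hn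
  · filter_upwards [hμ_pos] with n hn using integral_log_one_add_mul_abs_gaussianReal_le hb.le hn

theorem isEquivalent_integral_log_one_add_mul_abs_gaussianReal_of_tendsto_div {α : Type*}
    {l : Filter α} {b : ℝ} (hb : 0 < b) {a μ : α → ℝ} {v : α → ℝ≥0} (ha : Tendsto a l atTop)
    (hμ : Tendsto (fun n => μ n / a n) l (𝓝 1))
    (hv : Tendsto (fun n => (v n : ℝ) / μ n ^ 2) l (𝓝 0)) :
    (fun n => ∫ x, log (1 + b * |x|) ∂gaussianReal (μ n) (v n)) ~[l]
      fun n => log (1 + b * a n) := by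
  have hμa : μ ~[l] a := isEquivalent_of_tendsto_one hμ
  exact (isEquivalent_integral_log_one_add_mul_abs_gaussianReal hb (hμa.symm.tendsto_atTop ha)
    hv).trans ((hμa.log ha).trans (isEquivalent_log_one_add_mul hb ha).symm)

theorem stmt18
    (K L : ℕ) (hK : 1 ≤ K) (hL : 1 ≤ L)
    (ρ : ℝ) (hρ : 0 < ρ)
    (β m : Fin K → ℝ) (hβ : ∀ k, 0 < β k) (hm : ∀ k, 0 < m k)
    (μ : Fin K → ℕ → ℝ) (v : Fin K → ℕ → NNReal)
    (hμ : ∀ k, Tendsto (fun N : ℕ => μ k N / (((L : ℝ) / m k) * Real.log N))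
      atTop (nhds 1))
    (hv : ∀ k, Tendsto (fun N : ℕ => (v k N : ℝ) / μ k N ^ 2) atTop (nhds 0)) :
    Tendsto
      (fun N : ℕ =>
        (∑ k : Fin K,
          ∫ x, Real.logb 2 (1 + ρ * β k * |x|) ∂(gaussianReal (μ k N) (v k N))) /
          ∑ k : Fin K,
            Real.logb 2 (1 + ρ * β k * ((L : ℝ) / m k) * Real.log N))
      atTop (nhds 1) := by
  set J : Fin K → ℕ → ℝ := fun k N => ∫ x, log (1 + ρ * β k * |x|) ∂gaussianReal (μ k N) (v k N)
  set T : Fin K → ℕ → ℝ := fun k N => log (1 + ρ * β k * ((L : ℝ) / m k) * log N)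
  have hb : ∀ k, 0 < ρ * β k := fun k => mul_pos hρ (hβ k)
  have hc : ∀ k, 0 < (L : ℝ) / m k := fun k => div_pos (by exact_mod_cast hL) (hm k)
  have hT_nonneg : ∀ k, 0 ≤ T k := fun k N =>
    log_nonneg <| le_add_of_nonneg_right <|
      mul_nonneg (mul_pos (hb k) (hc k)).le (log_natCast_nonneg N)
  have hJT : ∀ k, J k ~[atTop] T k := fun k => by
    simpa only [J, T, mul_assoc, Function.comp_apply] using
      isEquivalent_integral_log_one_add_mul_abs_gaussianReal_of_tendsto_div (hb k)
        ((tendsto_log_atTop.comp tendsto_natCast_atTop_atTop).const_mul_atTop (hc k)) (hμ k)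
        (hv k)
  have hT_pos : ∀ᶠ N in atTop, 0 < ∑ k, T k N := by
    filter_upwards [eventually_ge_atTop 2] with N hN
    refine Finset.sum_pos' (fun k _ => hT_nonneg k N) ⟨⟨0, hK⟩, Finset.mem_univ _, ?_⟩
    have : (1 : ℝ) < N := Nat.one_lt_cast.mpr hN
    exact log_pos <| lt_add_of_pos_right _ <|
      mul_pos (mul_pos (hb _) (hc _)) (log_pos this)
  have hsum := IsEquivalent.finsetSum_of_nonneg Finset.univ (fun k _ => hT_nonneg k)
    (fun k _ => hJT k)
  rw [isEquivalent_iff_tendsto_one (hT_pos.mono fun _ h => h.ne')] at hsum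
  refine hsum.congr fun N => ?_
  simp only [Pi.div_apply, logb, integral_div, ← Finset.sum_div, J, T]
  rw [div_div_div_cancel_right₀ (log_pos one_lt_two).ne']
end

section
/- Let K ≥ 1 be a fixed integer, ρ > 0, and for each k ∈ {1, …, K} let β_k > 0. For each N, let X_{1,N}, …, X_{K,N} be independent real Gaussian random variables with X_{k,N} ~ N(μ_{k,N}, σ_{k,N}²), where μ_{k,N} → ∞ and σ_{k,N}²/μ_{k,N}² → 0 as N → ∞, and set R_N := Σ_{k=1}^K log₂(1 + ρ β_k |X_{k,N}|). Then Var(R_N)/(E[R_N])² → 0 as N → ∞. -/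
/-!
Write `ℓ(x) = log (1 + a |x|)`. Near `μ` the logarithm is Lipschitz with constant `2 / μ`, and far
from `μ` the difference `|ℓ(x) - ℓ(μ)|` is at most `log (1 + a |x - μ|) ≤ ℓ(μ) + |x - μ| / μ`; in
both regimes `|ℓ(x) - ℓ(μ)| ≤ 2 (1 + ℓ(μ)) |x - μ| / μ`. For `X ~ N(μ, v)` this bounds the second
moment of `ℓ(X) - ℓ(μ)` by `q ℓ(μ)²` with `q = (2 (1 + 1 / ℓ(μ)))² v / μ²`, which tends to `0`.
Summing over `k` by Cauchy–Schwarz gives `E[(R - c)²] ≤ q c²` with `c = Σ ℓ_k(μ_k)` and `q → 0`.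
Since `Var R + (E R - c)² = E[(R - c)²]`, we get `Var R ≤ q c²` and `E R ≥ (1 - √q) c`, hence
`Var R / (E R)² ≤ q / (1 - √q)² → 0`.
-/

open MeasureTheory ProbabilityTheory Filter Real

lemma log_one_add_mul_sub_log_one_add_mul_le {a y z : ℝ} (ha : 0 ≤ a) (hy : 0 ≤ y)
    (hz : 0 ≤ z) : log (1 + a * y) - log (1 + a * z) ≤ log (1 + a * |y - z|) := by
  have hd : 0 ≤ a * |y - z| := by positivity
  rw [sub_le_iff_le_add', ← log_mul (by positivity) (by positivity)]
  refine log_le_log (by positivity) ?_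
  nlinarith [le_abs_self (y - z), mul_nonneg (mul_nonneg ha hz) hd]

lemma abs_log_sub_log_le_div {m p q : ℝ} (hm : 0 < m) (hp : m ≤ p) (hq : m ≤ q) :
    |log p - log q| ≤ |p - q| / m := by
  have key : ∀ {p q : ℝ}, m ≤ p → m ≤ q → log p - log q ≤ |p - q| / m := fun {p q} hp hq => by
    have hq0 : 0 < q := hm.trans_le hq
    calc log p - log q = log (p / q) := (log_div (by linarith) hq0.ne').symm
      _ ≤ p / q - 1 := log_le_sub_one_of_pos (div_pos (by linarith) hq0)
      _ = (p - q) / q := by field_simp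
      _ ≤ |p - q| / q := by gcongr; exact le_abs_self _
      _ ≤ |p - q| / m := by gcongr
  exact abs_sub_le_iff.mpr ⟨key hp hq, abs_sub_comm p q ▸ key hq hp⟩

theorem abs_log_one_add_mul_abs_sub_le {a μ : ℝ} (ha : 0 ≤ a) (hμ : 0 < μ) (x : ℝ) :
    |log (1 + a * |x|) - log (1 + a * μ)| ≤ 2 * (1 + log (1 + a * μ)) * (|x - μ| / μ) := by
  set ℓ := log (1 + a * μ)
  set u := |x - μ| / μ
  have hℓ : 0 ≤ ℓ := log_nonneg (by nlinarith)
  have hu : 0 ≤ u := by positivity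
  have hxμ : |(|x| - μ)| ≤ |x - μ| := by
    simpa [abs_of_pos hμ] using abs_abs_sub_abs_le_abs_sub x μ
  rcases le_or_gt u (1 / 2) with hnear | hfar
  · have hx : μ / 2 ≤ |x| := by
      rw [div_le_iff₀ hμ] at hnear
      linarith [abs_sub_abs_le_abs_sub μ x, abs_sub_comm μ x, abs_of_pos hμ]
    calc |log (1 + a * |x|) - log (1 + a * μ)|
        ≤ |1 + a * |x| - (1 + a * μ)| / (1 + a * (μ / 2)) :=
          abs_log_sub_log_le_div (by positivity) (by nlinarith) (by nlinarith)
      _ ≤ 2 * u := by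
          rw [div_le_iff₀ (by positivity), show 1 + a * |x| - (1 + a * μ) = a * (|x| - μ) by ring,
            abs_mul, abs_of_nonneg ha]
          have : a * |(|x| - μ)| ≤ a * (u * μ) := by
            gcongr; rwa [div_mul_cancel₀ _ hμ.ne']
          nlinarith [mul_nonneg hu ha]
      _ ≤ 2 * (1 + ℓ) * u := by nlinarith
  · calc |log (1 + a * |x|) - log (1 + a * μ)|
        ≤ log (1 + a * |(|x| - μ)|) :=
          abs_sub_le_iff.mpr ⟨log_one_add_mul_sub_log_one_add_mul_le ha (abs_nonneg x) hμ.le,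
            abs_sub_comm |x| μ ▸ log_one_add_mul_sub_log_one_add_mul_le ha hμ.le (abs_nonneg x)⟩
      _ ≤ log ((1 + a * μ) * (1 + u)) := by
          refine log_le_log (by positivity) ?_
          have : |x - μ| = u * μ := by rw [div_mul_cancel₀ _ hμ.ne']
          nlinarith [mul_le_mul_of_nonneg_left hxμ ha, mul_nonneg ha hu,
            mul_nonneg (mul_nonneg ha hμ.le) hu]
      _ = ℓ + log (1 + u) := log_mul (by positivity) (by positivity)
      _ ≤ ℓ + u := by gcongr; linarith [log_le_sub_one_of_pos (by positivity : 0 < 1 + u)]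
      _ ≤ 2 * (1 + ℓ) * u := by nlinarith

lemma sq_logb_one_add_mul_abs_sub_le {a μ : ℝ} (ha : 0 ≤ a) (hμ : 0 < μ) (b x : ℝ) :
    (logb b (1 + a * |x|) - logb b (1 + a * μ)) ^ 2 ≤
      (2 * (1 + log (1 + a * μ)) / μ) ^ 2 / log b ^ 2 * (x - μ) ^ 2 := by
  have h : (log (1 + a * |x|) - log (1 + a * μ)) ^ 2
      ≤ (2 * (1 + log (1 + a * μ)) / μ) ^ 2 * (x - μ) ^ 2 := by
    rw [← sq_abs, ← sq_abs (x - μ), ← mul_pow, div_mul_eq_mul_div, mul_div_assoc]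
    exact pow_le_pow_left₀ (abs_nonneg _) (abs_log_one_add_mul_abs_sub_le ha hμ x) 2
  rw [div_mul_eq_mul_div, logb, logb, ← sub_div, div_pow]
  exact div_le_div_of_nonneg_right h (sq_nonneg _)

section

variable {Ω : Type*} [MeasurableSpace Ω] {P : Measure Ω}

lemma variance_add_sq_integral_sub [IsProbabilityMeasure P] {R : Ω → ℝ} (hR : MemLp R 2 P)
    (c : ℝ) : Var[R; P] + (P[R] - c) ^ 2 = ∫ ω, (R ω - c) ^ 2 ∂P := by
  rw [← variance_sub_const hR.aestronglyMeasurable c,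
    variance_eq_sub (X := fun ω => R ω - c) (hR.sub (memLp_const c)),
    integral_sub (hR.integrable one_le_two) (integrable_const c)]
  simp

lemma variance_div_sq_integral_le [IsProbabilityMeasure P] {R : Ω → ℝ} (hR : MemLp R 2 P)
    {c q : ℝ} (hc : 0 ≤ c) (hq₀ : 0 ≤ q) (hq₁ : q < 1)
    (h : ∫ ω, (R ω - c) ^ 2 ∂P ≤ q * c ^ 2) :
    Var[R; P] / P[R] ^ 2 ≤ q / (1 - √q) ^ 2 := by
  have hid := variance_add_sq_integral_sub hR c
  have hvar : Var[R; P] ≤ q * c ^ 2 := by nlinarith [sq_nonneg (P[R] - c)]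
  have hmean : (1 - √q) * c ≤ P[R] := by
    have : |P[R] - c| ≤ √q * c := by
      rw [← abs_of_nonneg (by positivity : 0 ≤ √q * c), ← sq_le_sq, mul_pow, sq_sqrt hq₀]
      nlinarith [variance_nonneg R P]
    linarith [neg_abs_le (P[R] - c)]
  have hsq : √q < 1 := by rwa [sqrt_lt' one_pos, one_pow]
  rcases hc.eq_or_lt with rfl | hc
  · have : Var[R; P] = 0 := le_antisymm (by simpa using hvar) (variance_nonneg R P)
    rw [this, zero_div]
    positivity
  · calc Var[R; P] / P[R] ^ 2 ≤ q * c ^ 2 / ((1 - √q) * c) ^ 2 := by gcongr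
      _ = q / (1 - √q) ^ 2 := by field_simp

lemma integral_sq_sum_le_card_mul_sum_integral_sq [IsFiniteMeasure P] {ι : Type*}
    (s : Finset ι) {G : ι → Ω → ℝ} (hG : ∀ i ∈ s, MemLp (G i) 2 P) :
    ∫ ω, (∑ i ∈ s, G i ω) ^ 2 ∂P ≤ s.card * ∑ i ∈ s, ∫ ω, G i ω ^ 2 ∂P := by
  rw [← integral_finsetSum s fun i hi => (hG i hi).integrable_sq, ← integral_const_mul]
  exact integral_mono_of_nonneg (Eventually.of_forall fun _ => sq_nonneg _)
    ((integrable_finsetSum s fun i hi => (hG i hi).integrable_sq).const_mul _)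
    (Eventually.of_forall fun _ => sq_sum_le_card_mul_sum_sq)

lemma integral_sq_sum_sub_sum_le [IsFiniteMeasure P] {ι : Type*} [Fintype ι] {Y : ι → Ω → ℝ}
    {m q : ι → ℝ} (hY : ∀ i, MemLp (Y i) 2 P) (hm : ∀ i, 0 ≤ m i) (hq : ∀ i, 0 ≤ q i)
    (h : ∀ i, ∫ ω, (Y i ω - m i) ^ 2 ∂P ≤ q i * m i ^ 2) :
    ∫ ω, (∑ i, Y i ω - ∑ i, m i) ^ 2 ∂P ≤ (Fintype.card ι * ∑ i, q i) * (∑ i, m i) ^ 2 := by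
  have hsq i : m i ^ 2 ≤ (∑ i, m i) ^ 2 :=
    pow_le_pow_left₀ (hm i) (Finset.single_le_sum (fun j _ => hm j) (Finset.mem_univ i)) 2
  simp_rw [← Finset.sum_sub_distrib]
  calc ∫ ω, (∑ i, (Y i ω - m i)) ^ 2 ∂P
      ≤ Fintype.card ι * ∑ i, ∫ ω, (Y i ω - m i) ^ 2 ∂P :=
        integral_sq_sum_le_card_mul_sum_integral_sq _ fun i _ => (hY i).sub (memLp_const (m i))
    _ ≤ Fintype.card ι * ∑ i, q i * (∑ i, m i) ^ 2 := by
        gcongr with i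
        exact (h i).trans (mul_le_mul_of_nonneg_left (hsq i) (hq i))
    _ = (Fintype.card ι * ∑ i, q i) * (∑ i, m i) ^ 2 := by rw [← Finset.sum_mul, mul_assoc]

lemma MeasureTheory.MemLp.logb_one_add_mul_abs {X : Ω → ℝ} {p : ENNReal} (hX : MemLp X p P)
    {a : ℝ} (ha : 0 ≤ a) (b : ℝ) : MemLp (fun ω => logb b (1 + a * |X ω|)) p P := by
  have hmeas : Measurable fun x : ℝ => logb b (1 + a * |x|) :=
    (measurable_log.comp (by fun_prop)).div_const (log b)
  refine (hX.const_mul (a / log b)).of_le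
    (hmeas.comp_aemeasurable hX.aestronglyMeasurable.aemeasurable).aestronglyMeasurable
    (Eventually.of_forall fun ω => ?_)
  have hlog : |log (1 + a * |X ω|)| ≤ a * |X ω| := by
    rw [abs_of_nonneg (log_nonneg (by nlinarith [abs_nonneg (X ω)]))]
    linarith [log_le_sub_one_of_pos (by positivity : 0 < 1 + a * |X ω|)]
  simp only [logb, norm_eq_abs, abs_div, abs_mul, abs_of_nonneg ha, div_mul_eq_mul_div]
  exact div_le_div_of_nonneg_right hlog (abs_nonneg _)

namespace ProbabilityTheory.HasLaw

variable {X : Ω → ℝ} {μ : ℝ} {v : NNReal}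

lemma integral_sq_sub_gaussianReal (hX : HasLaw X (gaussianReal μ v) P) :
    ∫ ω, (X ω - μ) ^ 2 ∂P = v := by
  have := hX.isProbabilityMeasure
  rw [← variance_id_gaussianReal (μ := μ), ← hX.variance_eq, variance_eq_integral hX.aemeasurable,
    hX.integral_eq, integral_id_gaussianReal]

lemma memLp_of_gaussianReal (hX : HasLaw X (gaussianReal μ v) P) (p : NNReal) : MemLp X p P := by
  have h := memLp_id_gaussianReal (μ := μ) (v := v) p
  rwa [← hX.map_eq, memLp_map_measure_iff (by rw [hX.map_eq]; fun_prop) hX.aemeasurable] at h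

theorem integral_sq_logb_one_add_mul_abs_sub_le (hX : HasLaw X (gaussianReal μ v) P) {a : ℝ}
    (ha : 0 < a) (hμ : 0 < μ) (b : ℝ) :
    ∫ ω, (logb b (1 + a * |X ω|) - logb b (1 + a * μ)) ^ 2 ∂P ≤
      (2 * ((log (1 + a * μ))⁻¹ + 1)) ^ 2 * (v / μ ^ 2) * logb b (1 + a * μ) ^ 2 := by
  have := hX.isProbabilityMeasure
  have hℓ : 0 < log (1 + a * μ) := log_pos (by nlinarith)
  set C := (2 * (1 + log (1 + a * μ)) / μ) ^ 2 / log b ^ 2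
  have hX2 : Integrable (fun ω => C * (X ω - μ) ^ 2) P :=
    ((hX.memLp_of_gaussianReal 2).sub (memLp_const μ)).integrable_sq.const_mul C
  calc ∫ ω, (logb b (1 + a * |X ω|) - logb b (1 + a * μ)) ^ 2 ∂P
      ≤ ∫ ω, C * (X ω - μ) ^ 2 ∂P :=
        integral_mono_of_nonneg (Eventually.of_forall fun _ => sq_nonneg _) hX2
          (Eventually.of_forall fun ω => sq_logb_one_add_mul_abs_sub_le ha.le hμ b (X ω))
    _ = C * v := by rw [integral_const_mul, hX.integral_sq_sub_gaussianReal]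
    _ = _ := by
        simp only [C, logb]
        field_simp

end ProbabilityTheory.HasLaw

end

theorem tendsto_variance_div_sq_integral_of_integral_sq_sub_le {Ω : ℕ → Type*}
    [∀ N, MeasurableSpace (Ω N)] {P : ∀ N, Measure (Ω N)} [∀ N, IsProbabilityMeasure (P N)]
    {R : ∀ N, Ω N → ℝ} {c q : ℕ → ℝ} (hq : Tendsto q atTop (nhds 0))
    (h : ∀ᶠ N in atTop, MemLp (R N) 2 (P N) ∧ 0 ≤ c N ∧ 0 ≤ q N ∧
      ∫ ω, (R N ω - c N) ^ 2 ∂(P N) ≤ q N * c N ^ 2) :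
    Tendsto (fun N => Var[R N; P N] / (P N)[R N] ^ 2) atTop (nhds 0) := by
  have hbound : Tendsto (fun N => q N / (1 - √(q N)) ^ 2) atTop (nhds (0 / (1 - √0) ^ 2)) :=
    hq.div ((tendsto_const_nhds.sub hq.sqrt).pow 2) (by simp)
  rw [zero_div] at hbound
  refine tendsto_of_tendsto_of_tendsto_of_le_of_le' tendsto_const_nhds hbound
    (Eventually.of_forall fun N => div_nonneg (variance_nonneg _ _) (sq_nonneg _)) ?_
  filter_upwards [h, hq.eventually (gt_mem_nhds one_pos)] with N ⟨hR, hc, hq₀, hN⟩ hq₁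
  exact variance_div_sq_integral_le hR hc hq₀ hq₁ hN

theorem stmt19_general
    (K : ℕ)
    (ρ : ℝ) (hρ : 0 < ρ)
    (β : Fin K → ℝ) (hβ : ∀ k, 0 < β k)
    (μ : Fin K → ℕ → ℝ) (v : Fin K → ℕ → NNReal)
    (hμ : ∀ k, Tendsto (fun N : ℕ => μ k N) atTop atTop)
    (hv : ∀ k, Tendsto (fun N : ℕ => (v k N : ℝ) / μ k N ^ 2) atTop (nhds 0))
    (Ω : ℕ → Type) [∀ N, MeasurableSpace (Ω N)]
    (P : ∀ N, Measure (Ω N)) [∀ N, IsProbabilityMeasure (P N)]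
    (X : ∀ N : ℕ, Fin K → Ω N → ℝ)
    (hdist : ∀ N : ℕ, ∀ k : Fin K,
      (P N).map (X N k) = gaussianReal (μ k N) (v k N)) :
    Tendsto
      (fun N : ℕ =>
        variance
            (fun ω => ∑ k : Fin K, Real.logb 2 (1 + ρ * β k * |X N k ω|)) (P N) /
          (∫ ω, ∑ k : Fin K, Real.logb 2 (1 + ρ * β k * |X N k ω|) ∂(P N)) ^ 2)
      atTop (nhds 0) := by
  have ha k : 0 < ρ * β k := mul_pos hρ (hβ k)
  have hlaw N k : HasLaw (X N k) (gaussianReal (μ k N) (v k N)) (P N) :=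
    ⟨.of_map_ne_zero (by rw [hdist]; exact IsProbabilityMeasure.ne_zero _), hdist N k⟩
  set q : Fin K → ℕ → ℝ := fun k N =>
    (2 * ((log (1 + ρ * β k * μ k N))⁻¹ + 1)) ^ 2 * (v k N / μ k N ^ 2)
  have hq k : Tendsto (q k) atTop (nhds 0) := by
    have hlog : Tendsto (fun N => log (1 + ρ * β k * μ k N)) atTop atTop :=
      tendsto_log_atTop.comp (tendsto_atTop_add_const_left _ 1 ((hμ k).const_mul_atTop (ha k)))
    simpa using (((tendsto_inv_atTop_zero.comp hlog).add_const 1).const_mul 2).pow 2 |>.mul (hv k)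
  refine tendsto_variance_div_sq_integral_of_integral_sq_sub_le
    (c := fun N => ∑ k, logb 2 (1 + ρ * β k * μ k N)) (q := fun N => K * ∑ k, q k N)
    (by simpa using (tendsto_finsetSum _ fun k _ => hq k).const_mul (K : ℝ)) ?_
  filter_upwards [eventually_all.2 fun k => (hμ k).eventually_gt_atTop 0] with N hμN
  have hmem k := ((hlaw N k).memLp_of_gaussianReal 2).logb_one_add_mul_abs (ha k).le 2
  have hm k : 0 ≤ logb 2 (1 + ρ * β k * μ k N) :=
    logb_nonneg one_lt_two (by nlinarith [mul_pos (ha k) (hμN k)])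
  have hq₀ k : 0 ≤ q k N := by positivity
  refine ⟨memLp_finsetSum _ fun k _ => hmem k, Finset.sum_nonneg fun k _ => hm k,
    by positivity, ?_⟩
  simpa using integral_sq_sum_sub_sum_le hmem hm hq₀ fun k =>
    (hlaw N k).integral_sq_logb_one_add_mul_abs_sub_le (ha k) (hμN k) 2

theorem stmt19
    (K : ℕ) (hK : 1 ≤ K)
    (ρ : ℝ) (hρ : 0 < ρ)
    (β : Fin K → ℝ) (hβ : ∀ k, 0 < β k)
    (μ : Fin K → ℕ → ℝ) (v : Fin K → ℕ → NNReal)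
    (hμ : ∀ k, Tendsto (fun N : ℕ => μ k N) atTop atTop)
    (hv : ∀ k, Tendsto (fun N : ℕ => (v k N : ℝ) / μ k N ^ 2) atTop (nhds 0))
    (Ω : ℕ → Type) [∀ N, MeasurableSpace (Ω N)]
    (P : ∀ N, Measure (Ω N)) [∀ N, IsProbabilityMeasure (P N)]
    (X : ∀ N : ℕ, Fin K → Ω N → ℝ)
    (hmeas : ∀ N : ℕ, ∀ k, Measurable (X N k))
    (hindep : ∀ N : ℕ, iIndepFun (X N) (P N))
    (hdist : ∀ N : ℕ, ∀ k : Fin K,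
      (P N).map (X N k) = gaussianReal (μ k N) (v k N)) :
    Tendsto
      (fun N : ℕ =>
        variance
            (fun ω => ∑ k : Fin K, Real.logb 2 (1 + ρ * β k * |X N k ω|)) (P N) /
          (∫ ω, ∑ k : Fin K, Real.logb 2 (1 + ρ * β k * |X N k ω|) ∂(P N)) ^ 2)
      atTop (nhds 0) :=
  stmt19_general K ρ hρ β hβ μ v hμ hv Ω P X hdist
end
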